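/- arXiv:1403.2344 — 6 statements merged into one kernel-verified Lean document; each statement's English description precedes it below -/
import Mathlib

section
/- Let X be a finite set with |X| ≥ 2r and let σ : X → [|X|] be a cyclic ordering of X. Let B be the family of r-subsets of X whose elements are numbered consecutively (in the cyclic sense) by σ. Then any intersecting subfamily A of B satisfies |A| ≤ r. -/
open Finset

/-- The set of `r` cyclically consecutive residues modulo `m`, starting at `s`. -/
def cyc (m s r : ℕ) : Finset ℕ := (Finset.range r).image fun i => (s + i) % m

/-- `A` meets the cyclic ordering `σ`: the `σ`-values of the elements of `A` are
consecutive in the cyclic sense modulo `m`. -/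
def Meets {α : Type*} [DecidableEq α] (m : ℕ) (σ : α → ℕ) (A : Finset α) : Prop :=
  ∃ s : ℕ, A.image (fun a => σ a % m) = cyc m s A.card

/-- A family of sets is intersecting if every two of its members intersect. -/
def Intersecting {β : Type*} [DecidableEq β] (𝒜 : Finset (Finset β)) : Prop :=
  ∀ A ∈ 𝒜, ∀ B ∈ 𝒜, (A ∩ B).Nonempty

/-- The family `𝒫_{k,r,n}` of generalised permutations: all `r`-subsets of
`[k] × [n]` with pairwise distinct first coordinates and pairwise distinct
second coordinates. -/
def genPerms (k r n : ℕ) : Finset (Finset (ℕ × ℕ)) :=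
  (Finset.Icc 1 k ×ˢ Finset.Icc 1 n).powerset.filter fun A =>
    A.card = r ∧ (∀ p ∈ A, ∀ q ∈ A, p.1 = q.1 → p = q) ∧
      (∀ p ∈ A, ∀ q ∈ A, p.2 = q.2 → p = q)

/-- The representative of `a` modulo `n` lying in `{1, …, n}`. -/
def mod1 (a : ℤ) (n : ℕ) : ℕ := ((a - 1) % (n : ℤ) + 1).toNat

/-- The cyclic ordering `τ(x,y) = k·((y - x) mod' n) + x`. -/
def tau (k n : ℕ) (p : ℕ × ℕ) : ℕ := k * mod1 ((p.2 : ℤ) - (p.1 : ℤ)) n + p.1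

/-- `σ` is an `r`-good cyclic ordering of `[k] × [n]`: any `r` elements numbered
consecutively in the cyclic sense by `σ` form a generalised permutation, i.e. they
have pairwise distinct first coordinates and pairwise distinct second coordinates. -/
def IsGood (k n r : ℕ) (σ : ℕ × ℕ → ℕ) : Prop :=
  ∀ A : Finset (ℕ × ℕ), A ⊆ Finset.Icc 1 k ×ˢ Finset.Icc 1 n → A.card = r →
    Meets (k * n) σ A → A ∈ genPerms k r n

/-- A permutation of `Fin k` regarded as a permutation of `[k] = {1, …, k} ⊆ ℕ`. -/
def liftPerm (k : ℕ) (φ : Equiv.Perm (Fin k)) (x : ℕ) : ℕ :=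
  if h : 1 ≤ x ∧ x - 1 < k then (φ ⟨x - 1, h.2⟩).val + 1 else x

/-- The cyclic ordering `τ_{φ,ψ}(x,y) = τ(φ⁻¹(x), ψ⁻¹(y))`. -/
def tauPerm (k n : ℕ) (φ : Equiv.Perm (Fin k)) (ψ : Equiv.Perm (Fin n)) (p : ℕ × ℕ) : ℕ :=
  tau k n (liftPerm k φ.symm p.1, liftPerm n ψ.symm p.2)

lemma cyc_congr {m : ℕ} (r : ℕ) {s t : ℕ} (h : s ≡ t [MOD m]) : cyc m s r = cyc m t r := by
  unfold cyc
  apply Finset.image_congr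
  intro i _
  exact h.add_right i

lemma cyc_mem {m s r x : ℕ} (hx : x ∈ cyc m s r) : ∃ i, i < r ∧ (s + i) % m = x := by
  obtain ⟨i, hi, hix⟩ := Finset.mem_image.mp hx
  exact ⟨i, Finset.mem_range.mp hi, hix⟩

lemma cyc_disj {m r u : ℕ} (hm : 2 * r ≤ m) {x : ℕ}
    (h1 : x ∈ cyc m u r) (h2 : x ∈ cyc m (u + r) r) : False := by
  obtain ⟨i, hi, hix⟩ := cyc_mem h1
  obtain ⟨i', hi', hix'⟩ := cyc_mem h2
  have h : u + i ≡ u + (r + i') [MOD m] := by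
    show (u + i) % m = (u + (r + i')) % m
    rw [hix, ← add_assoc, hix']
  have h' : i ≡ r + i' [MOD m] := Nat.ModEq.add_left_cancel' u h
  have hlt1 : i < m := by omega
  have hlt2 : r + i' < m := by omega
  rw [Nat.ModEq, Nat.mod_eq_of_lt hlt1, Nat.mod_eq_of_lt hlt2] at h'
  omega

open scoped Classical in
/-- Katona's cycle lemma, bound. -/
theorem katona_cycle_bound {α : Type*} [DecidableEq α] (r : ℕ) (X : Finset α)
    (hX : 2 * r ≤ X.card) (σ : α → ℕ) (hσ : Set.BijOn σ ↑X (Set.Icc 1 X.card))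
    (𝒜 : Finset (Finset α))
    (h𝒜 : 𝒜 ⊆ X.powerset.filter fun A => A.card = r ∧ Meets X.card σ A)
    (hint : Intersecting 𝒜) :
    𝒜.card ≤ r := by
  classical
  rcases 𝒜.eq_empty_or_nonempty with hemp | ⟨A₀, hA₀⟩
  · simp [hemp]
  rcases Nat.eq_zero_or_pos r with hr0 | hr
  · exfalso
    have h := h𝒜 hA₀
    rw [Finset.mem_filter] at h
    have hA0card : A₀.card = r := h.2.1
    have hne := hint A₀ hA₀ A₀ hA₀
    rw [Finset.inter_self] at hne
    have := Finset.card_pos.mpr hne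
    omega
  set m := X.card with hmdef
  have hm : 2 * r ≤ m := hX
  have hm0 : 0 < m := by omega
  -- basic facts about members of 𝒜
  have hmem : ∀ A ∈ 𝒜, A ⊆ X ∧ A.card = r ∧
      ∃ s, A.image (fun a => σ a % m) = cyc m s r := by
    intro A hA
    have h := h𝒜 hA
    rw [Finset.mem_filter, Finset.mem_powerset] at h
    obtain ⟨hsub, hcard, s, hs⟩ := h
    refine ⟨hsub, hcard, s, ?_⟩
    rw [← hcard]; exact hs
  have hσval : ∀ x ∈ X, 1 ≤ σ x ∧ σ x ≤ m := by
    intro x hx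
    exact Set.mem_Icc.mp (hσ.1 hx)
  have hinj : ∀ x ∈ X, ∀ y ∈ X, σ x % m = σ y % m → x = y := by
    intro x hx y hy hxy
    apply hσ.2.1 hx hy
    obtain ⟨h1, h2⟩ := hσval x hx
    obtain ⟨h3, h4⟩ := hσval y hy
    rcases lt_or_eq_of_le h2 with h | h
    · rcases lt_or_eq_of_le h4 with h' | h'
      · rwa [Nat.mod_eq_of_lt h, Nat.mod_eq_of_lt h'] at hxy
      · exfalso; rw [Nat.mod_eq_of_lt h, h', Nat.mod_self] at hxy; omega
    · rcases lt_or_eq_of_le h4 with h' | h'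
      · exfalso; rw [h, Nat.mod_self, Nat.mod_eq_of_lt h'] at hxy; omega
      · rw [h, h']
  -- equal value-images force equal sets
  have hsub' : ∀ A ∈ 𝒜, ∀ B ∈ 𝒜,
      A.image (fun a => σ a % m) = B.image (fun a => σ a % m) → A ⊆ B := by
    intro A hA B hB h x hx
    have hAX := (hmem A hA).1
    have hBX := (hmem B hB).1
    have hxi : σ x % m ∈ B.image (fun a => σ a % m) := by
      rw [← h]; exact Finset.mem_image_of_mem _ hx
    obtain ⟨y, hy, hxy⟩ := Finset.mem_image.mp hxi
    rwa [hinj y (hBX hy) x (hAX hx) hxy] at hy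
  have himg : ∀ A ∈ 𝒜, ∀ B ∈ 𝒜,
      A.image (fun a => σ a % m) = B.image (fun a => σ a % m) → A = B := by
    intro A hA B hB h
    exact Finset.Subset.antisymm (hsub' A hA B hB h) (hsub' B hB A hA h.symm)
  obtain ⟨hA₀X, hA₀card, s₀, hs₀⟩ := hmem A₀ hA₀
  set c := s₀ % m with hc
  set b := c + m - (r - 1) with hbdef
  -- each member of 𝒜 is an arc with offset < 2r-1 from the arc of A₀
  have hoff : ∀ A ∈ 𝒜, ∃ j, j < 2 * r - 1 ∧
      A.image (fun a => σ a % m) = cyc m (b + j) r := by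
    intro A hA
    obtain ⟨hAX, hAcard, s, hs⟩ := hmem A hA
    obtain ⟨x, hx⟩ := hint A₀ hA₀ A hA
    rw [Finset.mem_inter] at hx
    have hx0 : σ x % m ∈ cyc m s₀ r := by
      rw [← hs₀]; exact Finset.mem_image_of_mem _ hx.1
    have hxA : σ x % m ∈ cyc m s r := by
      rw [← hs]; exact Finset.mem_image_of_mem _ hx.2
    obtain ⟨i, hi, hieq⟩ := cyc_mem hx0
    obtain ⟨i', hi', hieq'⟩ := cyc_mem hxA
    refine ⟨r - 1 + i - i', by omega, ?_⟩
    rw [hs]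
    apply cyc_congr
    have h1 : s₀ + i ≡ s + i' [MOD m] := by
      show (s₀ + i) % m = (s + i') % m
      rw [hieq, hieq']
    have h2 : b + (r - 1 + i - i') + i' = c + m + i := by omega
    have h3 : c + m + i ≡ s₀ + i [MOD m] := by
      have e1 : c + m + i ≡ c + i [MOD m] := by
        show (c + m + i) % m = (c + i) % m
        rw [add_right_comm, Nat.add_mod_right]
      have e2 : c + i ≡ s₀ + i [MOD m] := (Nat.mod_modEq s₀ m).add_right i
      exact e1.trans e2
    have h4 : b + (r - 1 + i - i') + i' ≡ s + i' [MOD m] := by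
      rw [h2]; exact h3.trans h1
    exact Nat.ModEq.add_right_cancel' i' h4.symm
  choose! j hj1 hj2 using hoff
  -- fold offsets mod r; this is an injection into range r
  have key := Finset.card_le_card_of_injOn
    (f := fun A => if j A < r then j A else j A - r) (t := Finset.range r)
    (fun A hA => by
      have := hj1 A hA
      show (if j A < r then j A else j A - r) ∈ Finset.range r
      rw [Finset.mem_range]
      split_ifs <;> omega)
    (by
      intro A hA' B hB' hF
      have hA : A ∈ 𝒜 := hA'
      have hB : B ∈ 𝒜 := hB'
      have hF' : (if j A < r then j A else j A - r) = (if j B < r then j B else j B - r) := hF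
      have hjA := hj1 A hA
      have hjB := hj1 B hB
      have hcase : j A = j B ∨ j B = j A + r ∨ j A = j B + r := by
        split_ifs at hF' <;> omega
      rcases hcase with h | h | h
      · exact himg A hA B hB (by rw [hj2 A hA, hj2 B hB, h])
      · exfalso
        obtain ⟨x, hx⟩ := hint A hA B hB
        rw [Finset.mem_inter] at hx
        have h1 : σ x % m ∈ cyc m (b + j A) r := by
          rw [← hj2 A hA]; exact Finset.mem_image_of_mem _ hx.1
        have h2 : σ x % m ∈ cyc m (b + j A + r) r := by
          have := hj2 B hB
          rw [h, ← add_assoc] at this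
          rw [← this]; exact Finset.mem_image_of_mem _ hx.2
        exact cyc_disj hm h1 h2
      · exfalso
        obtain ⟨x, hx⟩ := hint A hA B hB
        rw [Finset.mem_inter] at hx
        have h1 : σ x % m ∈ cyc m (b + j B) r := by
          rw [← hj2 B hB]; exact Finset.mem_image_of_mem _ hx.2
        have h2 : σ x % m ∈ cyc m (b + j B + r) r := by
          have := hj2 A hA
          rw [h, ← add_assoc] at this
          rw [← this]; exact Finset.mem_image_of_mem _ hx.1
        exact cyc_disj hm h1 h2)
  simpa using key
end

section
/- Let X be a finite set with |X| > 2r and let σ be a cyclic ordering of X. Let B be the family of r-subsets of X that meet σ, and let A be an intersecting subfamily of B with |A| = r. Then there exists x ∈ X such that A consists exactly of those members of B containing x, i.e., A is a star of B. -/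
open Finset

/-- Integer core of Katona's uniqueness lemma. -/
lemma int_core (r : ℕ) (hr : 1 ≤ r) (D : Finset ℤ) (hcard : D.card = r)
    (hbd : ∀ x ∈ D, |x| ≤ (r : ℤ) - 1) (h0 : (0:ℤ) ∈ D)
    (hexc : ∀ x ∈ D, ∀ y ∈ D, x - y ≠ (r:ℤ) ∧ x - y ≠ (r:ℤ) + 1) :
    ∃ t : ℤ, ∀ x ∈ D, t - r < x ∧ x ≤ t := by
  have hrpos : (0:ℤ) < r := by exact_mod_cast hr
  -- the class map
  have hg : ∀ x ∈ D, x % (r:ℤ) = if 0 ≤ x then x else x + r := by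
    intro x hx
    have hb := hbd x hx
    rw [abs_le] at hb
    split_ifs with h
    · exact Int.emod_eq_of_lt h (by omega)
    · rw [← Int.add_emod_right]
      exact Int.emod_eq_of_lt (by omega) (by omega)
  -- injectivity of the class map on D
  have hinj : ∀ x ∈ D, ∀ y ∈ D, x % (r:ℤ) = y % (r:ℤ) → x = y := by
    intro x hx y hy hxy
    have h1 := hg x hx; have h2 := hg y hy
    have e1 := (hexc x hx y hy).1
    have e2 := (hexc y hy x hx).1
    split_ifs at h1 h2 <;> omega
  -- surjectivity onto Ico 0 r
  have hsurj : ∀ i : ℤ, 0 ≤ i → i < r → ∃ x ∈ D, x % (r:ℤ) = i := by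
    have himg : D.image (· % (r:ℤ)) = Finset.Ico (0:ℤ) r := by
      apply Finset.eq_of_subset_of_card_le
      · intro i hi
        simp only [mem_image] at hi
        obtain ⟨x, hx, rfl⟩ := hi
        simp only [Finset.mem_Ico]
        exact ⟨Int.emod_nonneg x (by omega), Int.emod_lt_of_pos x hrpos⟩
      · rw [Finset.card_image_of_injOn (fun x hx y hy h => hinj x hx y hy h), hcard]
        simp
    intro i h0i hir
    have : i ∈ D.image (· % (r:ℤ)) := by rw [himg]; simp [Finset.mem_Ico]; omega
    simpa [mem_image] using this
  -- take t to be the max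
  have hne : D.Nonempty := ⟨0, h0⟩
  refine ⟨D.max' hne, fun x hx => ?_⟩
  refine ⟨?_, D.le_max' x hx⟩
  by_contra hcon
  push_neg at hcon
  set t := D.max' hne with ht
  have htD : t ∈ D := D.max'_mem hne
  have ht0 : 0 ≤ t := D.le_max' 0 h0
  have htlt : t ≤ (r:ℤ) - 1 := by have := hbd t htD; rw [abs_le] at this; omega
  have hbx : |x| ≤ (r:ℤ) - 1 := hbd x hx
  rw [abs_le] at hbx
  have hxneg : x < 0 := by omega
  -- climb the negative classes
  have key : ∀ n : ℕ, x + r + n ≤ t → x + n ∈ D := by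
    intro n
    induction n with
    | zero => intro _; simpa using hx
    | succ n ih =>
      intro hn
      have hy : x + n ∈ D := ih (by push_cast at hn ⊢; omega)
      obtain ⟨z, hz, hzmod⟩ := hsurj (x + r + n + 1) (by push_cast; omega)
        (by push_cast at hn ⊢; omega)
      have hgz := hg z hz
      by_cases h0z : 0 ≤ z
      · exfalso
        have hzval : z = x + r + n + 1 := by rw [hgz, if_pos h0z] at hzmod; omega
        exact (hexc z hz (x + n) hy).2 (by push_cast at hzval ⊢; omega)
      · have hzval : z = x + n + 1 := by rw [hgz, if_neg h0z] at hzmod; omega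
        rw [← hzval] at *
        convert hz using 1
        push_cast; omega
  have hyD : t - r ∈ D := by
    have := key (t - r - x).toNat (by push_cast; omega)
    convert this using 1
    push_cast; omega
  have h1 := hg (t - r) hyD
  have h2 := hg t htD
  have : t - r = t := hinj _ hyD _ htD (by rw [h1, h2]; split_ifs <;> omega)
  omega

/-- An arc in `ZMod m`. -/
def zarc (m r : ℕ) (s : ZMod m) : Finset (ZMod m) := (Finset.range r).image fun i => s + (i : ℕ)

lemma mem_zarc {m r : ℕ} {s c : ZMod m} : c ∈ zarc m r s ↔ ∃ i, i < r ∧ c = s + (i : ℕ) := by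
  simp [zarc, eq_comm]

lemma zarc_card (m r : ℕ) [NeZero m] (h : r ≤ m) (s : ZMod m) : (zarc m r s).card = r := by
  rw [zarc, Finset.card_image_of_injOn, Finset.card_range]
  intro i hi j hj hij
  simp only [Finset.coe_range, Set.mem_Iio] at hi hj
  have h2 : ((i : ℕ) : ZMod m) = (j : ℕ) := by
    have := hij
    exact add_left_cancel this
  have := congrArg ZMod.val h2
  rwa [ZMod.val_cast_of_lt (lt_of_lt_of_le hi h),
    ZMod.val_cast_of_lt (lt_of_lt_of_le hj h)] at this

lemma nat_mod_inj {m a b : ℕ} (ha : 1 ≤ a) (ha' : a ≤ m) (hb : 1 ≤ b) (hb' : b ≤ m)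
    (h : a % m = b % m) : a = b := by
  have h1 : a % m = if a = m then 0 else a := by
    split_ifs with h'
    · simp [h']
    · exact Nat.mod_eq_of_lt (by omega)
  have h2 : b % m = if b = m then 0 else b := by
    split_ifs with h'
    · simp [h']
    · exact Nat.mod_eq_of_lt (by omega)
  split_ifs at h1 h2 <;> omega

lemma arc_of_meets {α : Type*} [DecidableEq α] (m r : ℕ) [NeZero m] (σ : α → ℕ)
    (A : Finset α) (h : Meets m σ A) (hc : A.card = r) :
    ∃ s : ZMod m, A.image (fun a => (σ a : ZMod m)) = zarc m r s := by
  obtain ⟨s, hs⟩ := h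
  refine ⟨(s : ZMod m), ?_⟩
  have h1 : A.image (fun a => (σ a : ZMod m)) = (A.image (fun a => σ a % m)).image
      (Nat.cast : ℕ → ZMod m) := by
    rw [Finset.image_image]
    exact Finset.image_congr fun a _ => (ZMod.natCast_mod _ _).symm
  rw [h1, hs, hc, cyc, Finset.image_image, zarc]
  refine Finset.image_congr fun i _ => ?_
  show (((s + i) % m : ℕ) : ZMod m) = (s : ZMod m) + (i : ℕ)
  rw [ZMod.natCast_mod]
  push_cast
  ring

open scoped Classical in
/-- Katona's cycle lemma, uniqueness: if `|X| > 2r` and an intersecting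
subfamily of the sets meeting `σ` has size `r`, then it is a star. -/
theorem katona_cycle_star {α : Type*} [DecidableEq α] (r : ℕ) (X : Finset α)
    (hX : 2 * r < X.card) (σ : α → ℕ) (hσ : Set.BijOn σ ↑X (Set.Icc 1 X.card))
    (𝒜 : Finset (Finset α))
    (h𝒜 : 𝒜 ⊆ X.powerset.filter fun A => A.card = r ∧ Meets X.card σ A)
    (hint : Intersecting 𝒜) (hcard : 𝒜.card = r) :
    ∃ x ∈ X, 𝒜 = (X.powerset.filter fun A => A.card = r ∧ Meets X.card σ A).filter
      fun A => x ∈ A := by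
  set m := X.card with hm
  -- trivial case r = 0
  rcases Nat.eq_zero_or_pos r with rfl | hr
  · have hXne : X.Nonempty := Finset.card_pos.mp (by omega)
    obtain ⟨x, hx⟩ := hXne
    refine ⟨x, hx, ?_⟩
    rw [Finset.card_eq_zero.mp hcard]
    symm
    rw [Finset.eq_empty_iff_forall_notMem]
    intro B hB
    simp only [Finset.mem_filter, Finset.mem_powerset] at hB
    obtain ⟨⟨_, hB0, _⟩, hxB⟩ := hB
    rw [Finset.card_eq_zero.mp hB0] at hxB
    exact absurd hxB (Finset.notMem_empty x)
  haveI : NeZero m := ⟨by omega⟩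
  have hm0 : (0 : ℤ) < m := by exact_mod_cast (by omega : 0 < m)
  have hrm : r ≤ m := by omega
  -- basic properties of σ
  have hσIcc : ∀ a ∈ X, 1 ≤ σ a ∧ σ a ≤ m := fun a ha => hσ.mapsTo ha
  have hσinj : ∀ a ∈ X, ∀ b ∈ X, ((σ a : ZMod m) = (σ b : ZMod m)) → a = b := by
    intro a ha b hb h
    rw [ZMod.natCast_eq_natCast_iff] at h
    exact hσ.injOn ha hb (nat_mod_inj (hσIcc a ha).1 (hσIcc a ha).2
      (hσIcc b hb).1 (hσIcc b hb).2 h)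
  set F : Finset α → Finset (ZMod m) := fun A => A.image (fun a => (σ a : ZMod m)) with hF
  have hmemF : ∀ A : Finset α, A ⊆ X → ∀ x ∈ X, (x ∈ A ↔ (σ x : ZMod m) ∈ F A) := by
    intro A hA x hx
    constructor
    · intro h; exact Finset.mem_image_of_mem _ h
    · intro h
      obtain ⟨a, haA, ha⟩ := Finset.mem_image.mp h
      rwa [hσinj a (hA haA) x hx ha] at haA
  have hFinj : ∀ A : Finset α, A ⊆ X → ∀ B : Finset α, B ⊆ X → F A = F B → A = B := by
    intro A hA B hB h
    ext a
    constructor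
    · intro haA
      exact (hmemF B hB a (hA haA)).mpr (h ▸ Finset.mem_image_of_mem _ haA)
    · intro haB
      exact (hmemF A hA a (hB haB)).mpr (h ▸ Finset.mem_image_of_mem _ haB)
  -- decode family members
  have h𝒜' : ∀ A ∈ 𝒜, A ⊆ X ∧ A.card = r ∧ Meets m σ A := by
    intro A hA
    have := h𝒜 hA
    simp only [Finset.mem_filter, Finset.mem_powerset] at this
    exact ⟨this.1, this.2.1, this.2.2⟩
  have hstex : ∀ A : Finset α, ∃ s : ZMod m, A ∈ 𝒜 → F A = zarc m r s := by
    intro A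
    by_cases hA : A ∈ 𝒜
    · obtain ⟨s, hs⟩ := arc_of_meets m r σ A (h𝒜' A hA).2.2 (h𝒜' A hA).2.1
      exact ⟨s, fun _ => hs⟩
    · exact ⟨0, fun h => absurd h hA⟩
  choose st hst using hstex
  have hstinj : ∀ A ∈ 𝒜, ∀ B ∈ 𝒜, st A = st B → A = B := by
    intro A hA B hB h
    exact hFinj A (h𝒜' A hA).1 B (h𝒜' B hB).1 (by rw [hst A hA, hst B hB, h])
  set S : Finset (ZMod m) := 𝒜.image st with hS
  have hScard : S.card = r := by
    rw [hS, Finset.card_image_of_injOn (fun A hA B hB h => hstinj A hA B hB h), hcard]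
  have hSpair : ∀ s ∈ S, ∀ t ∈ S, (zarc m r s ∩ zarc m r t).Nonempty := by
    intro s hs t ht
    obtain ⟨A, hA, rfl⟩ := Finset.mem_image.mp hs
    obtain ⟨B, hB, rfl⟩ := Finset.mem_image.mp ht
    obtain ⟨a, ha⟩ := hint A hA B hB
    rw [Finset.mem_inter] at ha
    refine ⟨(σ a : ZMod m), ?_⟩
    rw [Finset.mem_inter, ← hst A hA, ← hst B hB]
    exact ⟨Finset.mem_image_of_mem _ ha.1, Finset.mem_image_of_mem _ ha.2⟩
  -- base point
  have h𝒜ne : 𝒜.Nonempty := Finset.card_pos.mp (by omega)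
  obtain ⟨A0, hA0⟩ := h𝒜ne
  set s0 : ZMod m := st A0 with hs0
  have hs0S : s0 ∈ S := Finset.mem_image_of_mem _ hA0
  -- the displacement function
  set d : ZMod m → ℤ := fun u =>
    if ((u - s0).val : ℕ) < r then ((u - s0).val : ℤ) else ((u - s0).val : ℤ) - m with hd
  have hdrep : ∀ u : ZMod m, ((d u : ℤ) : ZMod m) = u - s0 := by
    intro u
    simp only [hd]
    split_ifs with h
    · push_cast
      exact ZMod.natCast_rightInverse _
    · push_cast
      rw [ZMod.natCast_rightInverse, ZMod.natCast_self]
      ring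
  -- pairwise structure: differences realised by arc intersections
  have hpair' : ∀ s ∈ S, ∀ t ∈ S, ∃ i j : ℕ, i < r ∧ j < r ∧ s + (i:ℕ) = t + (j:ℕ) := by
    intro s hs t ht
    obtain ⟨a, ha⟩ := hSpair s hs t ht
    rw [Finset.mem_inter, mem_zarc, mem_zarc] at ha
    obtain ⟨⟨i, hi, hia⟩, ⟨j, hj, hja⟩⟩ := ha
    exact ⟨i, j, hi, hj, by rw [← hia, ← hja]⟩
  -- bound on d over S
  have hdbd : ∀ s ∈ S, |d s| ≤ (r : ℤ) - 1 := by
    intro s hs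
    obtain ⟨i, j, hi, hj, hij⟩ := hpair' s hs s0 hs0S
    have hu : s - s0 = ((j : ℕ) : ZMod m) - ((i : ℕ) : ZMod m) := by
      have := hij
      linear_combination this
    have hval : (s - s0).val < m := ZMod.val_lt _
    simp only [hd]
    split_ifs with h
    · rw [abs_le]; omega
    · -- (s - s0).val ≥ r; show it is > m - r
      push_neg at h
      have hji : j < i := by
        by_contra hji
        push_neg at hji
        have : s - s0 = (((j - i : ℕ) : ℕ) : ZMod m) := by
          rw [hu]
          push_cast [Nat.cast_sub hji]
          ring
        rw [this, ZMod.val_cast_of_lt (by omega)] at h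
        omega
      have hneg : -(s - s0) = (((i - j : ℕ) : ℕ) : ZMod m) := by
        rw [hu]
        push_cast [Nat.cast_sub hji.le]
        ring
      have hne0 : s - s0 ≠ 0 := by
        intro h0
        rw [h0, ZMod.val_zero] at h
        omega
      have hnegval : (-(s - s0)).val = m - (s - s0).val := by
        rw [ZMod.neg_val, if_neg hne0]
      have hiv : (-(s - s0)).val < r := by
        rw [hneg, ZMod.val_cast_of_lt (by omega)]
        omega
      rw [abs_le]
      omega
  have hdinj : ∀ s ∈ S, ∀ t ∈ S, d s = d t → s = t := by
    intro s hs t ht h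
    have h1 := hdrep s
    have h2 := hdrep t
    rw [h] at h1
    have := h1.symm.trans h2
    linear_combination this
  have hd0 : d s0 = 0 := by
    rw [hd]
    simp [ZMod.val_zero, hr]
  -- the exclusion property
  have hexc : ∀ s ∈ S, ∀ t ∈ S, d s - d t ≠ (r:ℤ) ∧ d s - d t ≠ (r:ℤ) + 1 := by
    intro s hs t ht
    obtain ⟨i, j, hi, hj, hij⟩ := hpair' s hs t ht
    have hcast : ((d s + i - d t - j : ℤ) : ZMod m) = 0 := by
      push_cast
      rw [hdrep s, hdrep t]
      linear_combination hij
    rw [ZMod.intCast_zmod_eq_zero_iff_dvd] at hcast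
    obtain ⟨k, hk⟩ := hcast
    have hbs := hdbd s hs
    have hbt := hdbd t ht
    rw [abs_le] at hbs hbt
    have hke : |k| ≤ 1 := by
      by_contra hk2
      push_neg at hk2
      have h2 : 2 ≤ |k| := by omega
      have h3 : 2 * (m:ℤ) ≤ |(m:ℤ) * k| := by
        rw [abs_mul, abs_of_pos hm0]
        nlinarith
      rw [← hk] at h3
      have habs : |d s + (i:ℤ) - d t - (j:ℤ)| ≤ 3 * (r:ℤ) - 3 :=
        abs_le.mpr ⟨by omega, by omega⟩
      have hrm' : (2:ℤ) * r < m := by exact_mod_cast hX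
      linarith
    rw [abs_le] at hke
    obtain ⟨hke1, hke2⟩ := hke
    have hrm' : (2:ℤ) * r < m := by exact_mod_cast hX
    constructor <;> intro hval <;> interval_cases k <;> omega
  -- apply the integer core lemma
  have hDcard : (S.image d).card = r := by
    rw [Finset.card_image_of_injOn (fun s hs t ht h => hdinj s hs t ht h), hScard]
  obtain ⟨t, htp⟩ := int_core r hr (S.image d) hDcard
    (by
      intro x hx
      obtain ⟨s, hs, rfl⟩ := Finset.mem_image.mp hx
      exact hdbd s hs)
    (by
      rw [Finset.mem_image]
      exact ⟨s0, hs0S, hd0⟩)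
    (by
      intro x hx y hy
      obtain ⟨s, hs, rfl⟩ := Finset.mem_image.mp hx
      obtain ⟨u, hu, rfl⟩ := Finset.mem_image.mp hy
      exact hexc s hs u hu)
  -- the common point
  set c : ZMod m := s0 + ((t : ℤ) : ZMod m) with hc
  have hcmem : ∀ s ∈ S, c ∈ zarc m r s := by
    intro s hs
    have hts := htp (d s) (Finset.mem_image_of_mem _ hs)
    rw [mem_zarc]
    refine ⟨(t - d s).toNat, by omega, ?_⟩
    have : (((t - d s).toNat : ℕ) : ZMod m) = ((t - d s : ℤ) : ZMod m) := by
      rw [← Int.toNat_of_nonneg (by omega : (0:ℤ) ≤ t - d s)]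
      push_cast
      rfl
    rw [this, hc]
    push_cast
    have := hdrep s
    linear_combination this
  -- S consists exactly of the starts of arcs through c
  set T : Finset (ZMod m) := (Finset.range r).image (fun j => c - (j : ℕ)) with hT
  have hST : S = T := by
    apply Finset.eq_of_subset_of_card_le
    · intro s hs
      obtain ⟨i, hi, hci⟩ := mem_zarc.mp (hcmem s hs)
      rw [hT, Finset.mem_image]
      exact ⟨i, Finset.mem_range.mpr hi, by rw [hci]; ring⟩
    · calc T.card ≤ (Finset.range r).card := Finset.card_image_le
        _ = r := Finset.card_range r
        _ = S.card := hScard.symm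
  have hstart : ∀ s : ZMod m, c ∈ zarc m r s → s ∈ S := by
    intro s hcs
    obtain ⟨i, hi, hci⟩ := mem_zarc.mp hcs
    rw [hST, hT, Finset.mem_image]
    exact ⟨i, Finset.mem_range.mpr hi, by rw [hci]; ring⟩
  -- find the element x of X with σ x ≡ c
  have hcv : (if c = 0 then m else c.val) ∈ Set.Icc 1 m := by
    split_ifs with h
    · exact ⟨by omega, le_rfl⟩
    · exact ⟨by
        have := (ZMod.val_eq_zero c).not.mpr h
        omega, (ZMod.val_lt c).le⟩
  obtain ⟨x, hxX, hσx⟩ := hσ.surjOn hcv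
  have hxc : (σ x : ZMod m) = c := by
    rw [hσx]
    split_ifs with h
    · rw [ZMod.natCast_self, h]
    · exact ZMod.natCast_rightInverse c
  -- conclusion
  refine ⟨x, hxX, ?_⟩
  ext B
  simp only [Finset.mem_filter, Finset.mem_powerset]
  constructor
  · intro hB
    obtain ⟨hBX, hBr, hBm⟩ := h𝒜' B hB
    refine ⟨⟨hBX, hBr, hBm⟩, ?_⟩
    rw [hmemF B hBX x hxX, hst B hB, hxc]
    exact hcmem (st B) (Finset.mem_image_of_mem _ hB)
  · rintro ⟨⟨hBX, hBr, hBm⟩, hxB⟩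
    obtain ⟨s, hsB⟩ := arc_of_meets m r σ B hBm hBr
    have hcB : c ∈ zarc m r s := by
      rw [← hsB, ← hxc]
      exact Finset.mem_image_of_mem _ hxB
    obtain ⟨A, hA, hAs⟩ := Finset.mem_image.mp (hstart s hcB)
    have : A = B := hFinj A (h𝒜' A hA).1 B hBX (by rw [hst A hA, hAs, ← hsB])
    rwa [← this]
end

section
/- Let k ≤ n be positive integers, r ∈ [k-1], and define τ : [k] × [n] → [kn] by τ(x,y) = k·((y - x) mod' n) + x. Then τ is an r-good cyclic ordering of [k] × [n]: whenever (x₁,y₁),...,(x_r,y_r) are distinct elements of [k]×[n] whose τ-values are consecutive in the cyclic sense modulo kn, the first coordinates x₁,...,x_r are pairwise distinct and the second coordinates y₁,...,y_r are pairwise distinct. -/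
open Finset

lemma core_lemma (k n d X1 Y1 M1 X2 Y2 M2 : ℤ) (hk : 2 ≤ k) (hkn : k ≤ n)
    (hd1 : 1 ≤ d) (hd2 : d ≤ k - 2)
    (hX1 : 1 ≤ X1) (hX1' : X1 ≤ k) (hX2 : 1 ≤ X2) (hX2' : X2 ≤ k)
    (h1 : n ∣ Y1 - X1 - M1) (h2 : n ∣ Y2 - X2 - M2)
    (h : k * n ∣ (k * M2 + X2) - (k * M1 + X1) - d) :
    X1 ≠ X2 ∧ Y1 ≠ Y2 := by
  obtain ⟨t, ht⟩ := h
  obtain ⟨u, hu⟩ := h1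
  obtain ⟨v, hv⟩ := h2
  obtain ⟨c, hc⟩ : ∃ c : ℤ, c = M2 - M1 - n * t := ⟨_, rfl⟩
  have hkc : k * c = d - (X2 - X1) := by rw [hc]; linear_combination ht
  have hy : n ∣ (Y2 - Y1) - (X2 - X1) - c := ⟨v - u + t, by rw [hc]; linear_combination hv - hu⟩
  have hc01 : c = 0 ∨ c = 1 := by
    rcases lt_trichotomy c 0 with h'|h'|h'
    · exfalso; nlinarith
    · exact Or.inl h'
    · right
      have h2' : c ≤ 1 := by nlinarith
      linarith
  constructor
  · rcases hc01 with rfl|rfl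
    · intro hX; rw [hX] at hkc; simp at hkc; omega
    · intro hX; rw [hX] at hkc; simp at hkc; omega
  · intro hY
    rw [hY] at hy
    have hy' : n ∣ (X2 - X1) + c := by
      have h3 := (dvd_neg).mpr hy
      have heq : -(Y2 - Y2 - (X2 - X1) - c) = (X2 - X1) + c := by ring
      rwa [heq] at h3
    rcases hc01 with rfl|rfl
    · have hed : X2 - X1 = d := by linarith [hkc]
      have : n ≤ (X2 - X1) + 0 := Int.le_of_dvd (by omega) hy'
      omega
    · have hed : X2 - X1 = d - k := by linarith [hkc]
      have hneg : n ∣ -((X2 - X1) + 1) := (dvd_neg).mpr hy'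
      have : n ≤ -((X2 - X1) + 1) := Int.le_of_dvd (by omega) hneg
      omega

lemma mod1_dvd (a : ℤ) (n : ℕ) (hn : 0 < n) : (n:ℤ) ∣ a - mod1 a n := by
  unfold mod1
  have hn' : (0:ℤ) < n := by exact_mod_cast hn
  have h : (0:ℤ) ≤ (a-1) % n := Int.emod_nonneg _ (by positivity)
  rw [Int.toNat_of_nonneg (by linarith)]
  refine ⟨(a-1) / n, ?_⟩
  have := Int.emod_def (a-1) (n:ℤ)
  linarith

/-- Key step: two grid elements whose τ-residues lie at distinct positions of a
consecutive window of length `r` differ in both coordinates. -/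
lemma step_lemma (k n r : ℕ) (hr : r ≤ k - 1) (hk2 : 2 ≤ k) (hkn : k ≤ n)
    (p q : ℕ × ℕ)
    (hp : p ∈ Finset.Icc 1 k ×ˢ Finset.Icc 1 n) (hq : q ∈ Finset.Icc 1 k ×ˢ Finset.Icc 1 n)
    (s i j : ℕ) (hij : i < j) (hjr : j < r)
    (hip : tau k n p % (k * n) = (s + i) % (k * n))
    (hjq : tau k n q % (k * n) = (s + j) % (k * n)) :
    p.1 ≠ q.1 ∧ p.2 ≠ q.2 := by
  rw [Finset.mem_product, Finset.mem_Icc, Finset.mem_Icc] at hp hq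
  have hn0 : 0 < n := by omega
  have cast1 : ((tau k n p : ℕ) : ℤ) % (((k*n:ℕ)) : ℤ) = ((s+i : ℕ) : ℤ) % (((k*n:ℕ)) : ℤ) := by
    exact_mod_cast congrArg (Nat.cast (R := ℤ)) hip
  have cast2 : ((tau k n q : ℕ) : ℤ) % (((k*n:ℕ)) : ℤ) = ((s+j : ℕ) : ℤ) % (((k*n:ℕ)) : ℤ) := by
    exact_mod_cast congrArg (Nat.cast (R := ℤ)) hjq
  have d1 : ((k*n : ℕ) : ℤ) ∣ ((s+i : ℕ) : ℤ) - (tau k n p : ℕ) := Int.ModEq.dvd cast1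
  have d2 : ((k*n : ℕ) : ℤ) ∣ ((s+j : ℕ) : ℤ) - (tau k n q : ℕ) := Int.ModEq.dvd cast2
  have dd : ((k:ℤ) * n) ∣ ((tau k n q : ℕ) : ℤ) - ((tau k n p : ℕ) : ℤ) - ((j : ℤ) - i) := by
    have h3 := dvd_sub d1 d2
    have heq : (((s+i : ℕ) : ℤ) - (tau k n p : ℕ)) - (((s+j : ℕ) : ℤ) - (tau k n q : ℕ))
        = ((tau k n q : ℕ) : ℤ) - ((tau k n p : ℕ) : ℤ) - ((j : ℤ) - i) := by
      push_cast; ring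
    rw [heq] at h3
    exact_mod_cast h3
  have taup : ((tau k n p : ℕ) : ℤ) = k * (mod1 ((p.2:ℤ) - p.1) n) + p.1 := by
    unfold tau; push_cast; ring
  have tauq : ((tau k n q : ℕ) : ℤ) = k * (mod1 ((q.2:ℤ) - q.1) n) + q.1 := by
    unfold tau; push_cast; ring
  have m1 : (n:ℤ) ∣ (p.2:ℤ) - p.1 - (mod1 ((p.2:ℤ) - p.1) n) := mod1_dvd _ _ hn0
  have m2 : (n:ℤ) ∣ (q.2:ℤ) - q.1 - (mod1 ((q.2:ℤ) - q.1) n) := mod1_dvd _ _ hn0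
  have key := core_lemma (k:ℤ) (n:ℤ) ((j:ℤ) - i) p.1 p.2 (mod1 ((p.2:ℤ) - p.1) n)
      q.1 q.2 (mod1 ((q.2:ℤ) - q.1) n)
      (by exact_mod_cast hk2) (by exact_mod_cast hkn)
      (by omega) (by omega)
      (by exact_mod_cast hp.1.1) (by exact_mod_cast hp.1.2)
      (by exact_mod_cast hq.1.1) (by exact_mod_cast hq.1.2)
      m1 m2 (by rw [← taup, ← tauq]; exact dd)
  exact ⟨fun h => key.1 (by exact_mod_cast h), fun h => key.2 (by exact_mod_cast h)⟩

/-- For `r ∈ [k-1]`, `τ` is an `r`-good cyclic ordering of `[k] × [n]`. -/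
theorem tau_isGood (k r n : ℕ) (hr1 : 1 ≤ r) (hr : r ≤ k - 1) (hkn : k ≤ n) :
    IsGood k n r (tau k n) := by
  have hk2 : 2 ≤ k := by omega
  intro A hA hcard hmeet
  obtain ⟨s, hs⟩ := hmeet
  rw [hcard] at hs
  have hm0 : 0 < k * n := Nat.mul_pos (by omega) (by omega)
  have hrm : r < k * n := by
    have h1 : k ≤ k * n := Nat.le_mul_of_pos_right k (by omega)
    omega
  have hcyccard : (cyc (k*n) s r).card = r := by
    unfold cyc
    rw [Finset.card_image_of_injOn, Finset.card_range]
    intro i hi j hj hij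
    simp only [Finset.coe_range, Set.mem_Iio] at hi hj
    have h2 : i % (k*n) = j % (k*n) := Nat.ModEq.add_left_cancel' s hij
    rwa [Nat.mod_eq_of_lt (hi.trans hrm), Nat.mod_eq_of_lt (hj.trans hrm)] at h2
  have hinj : Set.InjOn (fun a => tau k n a % (k*n)) A := by
    rw [← Finset.card_image_iff]
    rw [hs, hcyccard, hcard]
  have hidx : ∀ p ∈ A, ∃ i < r, tau k n p % (k*n) = (s + i) % (k*n) := by
    intro p hp
    have h3 : tau k n p % (k*n) ∈ cyc (k*n) s r := by
      rw [← hs]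
      exact Finset.mem_image_of_mem _ hp
    unfold cyc at h3
    simp only [Finset.mem_image, Finset.mem_range] at h3
    obtain ⟨i, hi, h⟩ := h3
    exact ⟨i, hi, h.symm⟩
  have key : ∀ p ∈ A, ∀ q ∈ A, p ≠ q → p.1 ≠ q.1 ∧ p.2 ≠ q.2 := by
    intro p hp q hq hpq
    obtain ⟨i, hi, hip⟩ := hidx p hp
    obtain ⟨j, hj, hjq⟩ := hidx q hq
    have hij : i ≠ j := by
      rintro rfl
      exact hpq (hinj hp hq (hip.trans hjq.symm))
    rcases lt_or_gt_of_ne hij with h'|h'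
    · exact step_lemma k n r hr hk2 hkn p q (hA hp) (hA hq) s i j h' hj hip hjq
    · have := step_lemma k n r hr hk2 hkn q p (hA hq) (hA hp) s j i h' hi hjq hip
      exact ⟨this.1.symm, this.2.symm⟩
  unfold genPerms
  rw [Finset.mem_filter, Finset.mem_powerset]
  refine ⟨hA, hcard, ?_, ?_⟩
  · intro p hp q hq h
    by_contra hne
    exact (key p hp q hq hne).1 h
  · intro p hp q hq h
    by_contra hne
    exact (key p hp q hq hne).2 h
end

section
/- Let k ≤ n, r ≤ k-1, and let T_{k,n} = {τ_{φ,ψ} : φ ∈ S_k, ψ ∈ S_n} where τ_{φ,ψ}(x,y) = τ(φ⁻¹(x),ψ⁻¹(y)) and τ(x,y) = k·((y-x) mod' n) + x. Then each member P of P_{k,r,n} meets exactly r!·(k-r)!·(n-r)!·kn members of T_{k,n} (counted with multiplicity over pairs (φ,ψ) ∈ S_k × S_n). -/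
open Finset

-- ## auxiliary lemmas


lemma mod1_cast (a : ℤ) {n : ℕ} (hn : 0 < n) : (mod1 a n : ℤ) = (a - 1) % (n : ℤ) + 1 := by
  have h1 : 0 ≤ (a - 1) % (n : ℤ) := Int.emod_nonneg _ (by exact_mod_cast hn.ne')
  simp only [mod1]
  omega

lemma mod1_bounds (a : ℤ) {n : ℕ} (hn : 0 < n) : 1 ≤ mod1 a n ∧ mod1 a n ≤ n := by
  have h1 : 0 ≤ (a - 1) % (n : ℤ) := Int.emod_nonneg _ (by exact_mod_cast hn.ne')
  have h2 : (a - 1) % (n : ℤ) < n := Int.emod_lt_of_pos _ (by exact_mod_cast hn)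
  have := mod1_cast a hn
  constructor <;> [skip; skip] <;> omega

lemma mod1_modeq (a : ℤ) {n : ℕ} (hn : 0 < n) : (mod1 a n : ℤ) ≡ a [ZMOD n] := by
  rw [Int.ModEq, mod1_cast a hn]
  conv_rhs => rw [show a = (a-1) + 1 by ring]
  rw [Int.add_emod ((a-1) % (n:ℤ)) 1, Int.emod_emod_of_dvd _ dvd_rfl, ← Int.add_emod]

lemma mod1_eq_mod1 {a b : ℤ} {n : ℕ} (hn : 0 < n) (h : a ≡ b [ZMOD n]) :
    mod1 a n = mod1 b n := by
  simp only [mod1]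
  have : (a - 1) % (n:ℤ) = (b - 1) % (n:ℤ) := Int.ModEq.sub_right 1 h
  rw [this]

lemma mod1_inj {a b : ℤ} {n : ℕ} (hn : 0 < n) (h : mod1 a n = mod1 b n) :
    a ≡ b [ZMOD n] := by
  have ha := mod1_modeq a hn
  have hb := mod1_modeq b hn
  have : (mod1 a n : ℤ) = mod1 b n := by exact_mod_cast h
  calc a ≡ (mod1 a n : ℤ) [ZMOD n] := ha.symm
    _ = (mod1 b n : ℤ) := this
    _ ≡ b [ZMOD n] := hb


section Tau
variable {k n : ℕ}

/-- Explicit inverse of `tau` modulo `k*n`. -/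
def iota (k n : ℕ) (t : ℕ) : ℕ × ℕ :=
  (mod1 (t : ℤ) k, mod1 (((t : ℤ) - mod1 (t : ℤ) k) / k + mod1 (t : ℤ) k) n)

lemma iota_mem_box (hk : 0 < k) (hn : 0 < n) (t : ℕ) :
    iota k n t ∈ Finset.Icc 1 k ×ˢ Finset.Icc 1 n := by
  have h1 := mod1_bounds (t : ℤ) hk
  have h2 := mod1_bounds (((t : ℤ) - mod1 (t : ℤ) k) / k + mod1 (t : ℤ) k) hn
  simp [iota, Finset.mem_product, Finset.mem_Icc, h1.1, h1.2, h2.1, h2.2]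

lemma tau_mem_bounds (hk : 0 < k) (hn : 0 < n) {p : ℕ × ℕ}
    (hp : p ∈ Finset.Icc 1 k ×ˢ Finset.Icc 1 n) :
    k + 1 ≤ tau k n p ∧ tau k n p ≤ k * n + k := by
  simp only [Finset.mem_product, Finset.mem_Icc] at hp
  have h := mod1_bounds ((p.2 : ℤ) - (p.1 : ℤ)) hn
  unfold tau
  constructor
  · nlinarith [h.1, hp.1.1]
  · nlinarith [h.2, hp.1.2]

lemma tau_inj_mod (hk : 0 < k) (hn : 0 < n) {p q : ℕ × ℕ}
    (hp : p ∈ Finset.Icc 1 k ×ˢ Finset.Icc 1 n) (hq : q ∈ Finset.Icc 1 k ×ˢ Finset.Icc 1 n)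
    (h : tau k n p % (k * n) = tau k n q % (k * n)) : p = q := by
  have hbp := tau_mem_bounds hk hn hp
  have hbq := tau_mem_bounds hk hn hq
  have heq : tau k n p = tau k n q := by
    have hdvd : ((k*n : ℕ):ℤ) ∣ (tau k n q : ℤ) - tau k n p :=
      Nat.ModEq.dvd (show tau k n p ≡ tau k n q [MOD k*n] from h)
    have b1 : (k:ℤ) + 1 ≤ (tau k n p : ℤ) := by exact_mod_cast hbp.1
    have b2 : (tau k n p : ℤ) ≤ (k:ℤ) * n + k := by exact_mod_cast hbp.2
    have b3 : (k:ℤ) + 1 ≤ (tau k n q : ℤ) := by exact_mod_cast hbq.1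
    have b4 : (tau k n q : ℤ) ≤ (k:ℤ) * n + k := by exact_mod_cast hbq.2
    have habs : |(tau k n q : ℤ) - tau k n p| < ((k*n:ℕ):ℤ) := by
      rw [abs_lt]
      push_cast
      constructor <;> linarith
    have := Int.eq_zero_of_abs_lt_dvd hdvd habs
    omega
  simp only [Finset.mem_product, Finset.mem_Icc] at hp hq
  unfold tau at heq
  have hm2 := mod1_bounds ((p.2 : ℤ) - (p.1 : ℤ)) hn
  have hm2' := mod1_bounds ((q.2 : ℤ) - (q.1 : ℤ)) hn
  have hx : p.1 = q.1 := by
    rcases Nat.lt_trichotomy (mod1 ((p.2:ℤ) - p.1) n) (mod1 ((q.2:ℤ) - q.1) n) with h'|h'|h'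
    · have hkm : k * mod1 ((p.2:ℤ) - p.1) n + k ≤ k * mod1 ((q.2:ℤ) - q.1) n := by
        calc k * mod1 ((p.2:ℤ) - p.1) n + k = k * (mod1 ((p.2:ℤ) - p.1) n + 1) := by ring
        _ ≤ k * mod1 ((q.2:ℤ) - q.1) n := Nat.mul_le_mul_left k h'
      have := hp.1.2
      have := hq.1.1
      linarith
    · rw [h'] at heq; exact Nat.add_left_cancel heq
    · have hkm : k * mod1 ((q.2:ℤ) - q.1) n + k ≤ k * mod1 ((p.2:ℤ) - p.1) n := by
        calc k * mod1 ((q.2:ℤ) - q.1) n + k = k * (mod1 ((q.2:ℤ) - q.1) n + 1) := by ring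
        _ ≤ k * mod1 ((p.2:ℤ) - p.1) n := Nat.mul_le_mul_left k h'
      have := hq.1.2
      have := hp.1.1
      linarith
  have hmeq : mod1 ((p.2:ℤ) - p.1) n = mod1 ((q.2:ℤ) - q.1) n := by
    have hkk : k * mod1 ((p.2:ℤ) - p.1) n = k * mod1 ((q.2:ℤ) - q.1) n := by
      linarith [heq, hx]
    exact Nat.eq_of_mul_eq_mul_left hk hkk
  have hmod := mod1_inj hn hmeq
  rw [hx] at hmod
  have h3 : (p.2 : ℤ) ≡ q.2 [ZMOD n] := by
    have := hmod.add_right (q.1 : ℤ); simpa using this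
  have h4 : ((n:ℕ):ℤ) ∣ (q.2 : ℤ) - p.2 := h3.dvd
  have hy : p.2 = q.2 := by
    have habs : |(q.2 : ℤ) - p.2| < ((n:ℕ):ℤ) := by
      rw [abs_lt]
      have := hp.2.1; have := hp.2.2; have := hq.2.1; have := hq.2.2
      constructor <;> [push_cast; push_cast] <;> omega
    have := Int.eq_zero_of_abs_lt_dvd h4 habs
    omega
  exact Prod.ext hx hy

lemma tau_iota (hk : 0 < k) (hn : 0 < n) (t : ℕ) :
    tau k n (iota k n t) % (k * n) = t % (k * n) := by
  set x := mod1 (t : ℤ) k with hxdef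
  have hdvd : (k:ℤ) ∣ ((t:ℤ) - x) := (mod1_modeq (t:ℤ) hk).dvd
  set q : ℤ := ((t : ℤ) - x) / k with hq
  have hkq : (k:ℤ) * q = (t:ℤ) - x := Int.mul_ediv_cancel' hdvd
  have hy : (iota k n t).2 = mod1 (q + x) n := rfl
  have hx' : (iota k n t).1 = x := rfl
  have key : (tau k n (iota k n t) : ℤ) ≡ (t : ℤ) [ZMOD (k*n : ℕ)] := by
    unfold tau
    rw [hx', hy]
    push_cast
    have h1 : mod1 (((mod1 (q + x) n : ℤ)) - (x:ℤ)) n = mod1 q n := by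
      apply mod1_eq_mod1 hn
      calc ((mod1 (q + x) n : ℤ)) - (x:ℤ) ≡ (q + x) - x [ZMOD n] :=
            (mod1_modeq (q + x) hn).sub_right _
        _ = q := by ring
    rw [h1]
    have h2 : (k : ℤ) * (mod1 q n : ℤ) ≡ k * q [ZMOD (k*n:ℕ)] := by
      have := (mod1_modeq q hn).dvd
      rcases this with ⟨c, hc⟩
      have : ((k*n : ℕ) : ℤ) ∣ (k : ℤ) * q - k * mod1 q n := by
        push_cast
        exact ⟨c, by rw [mul_assoc, ← hc]; ring⟩
      exact (Int.modEq_iff_dvd.mpr this)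
    calc (k : ℤ) * (mod1 q n : ℤ) + x ≡ k * q + x [ZMOD (k*n:ℕ)] := h2.add_right _
      _ = t := by rw [hkq]; ring
  have hfin : (tau k n (iota k n t) : ℤ) % ((k*n : ℕ) : ℤ) = (t : ℤ) % ((k*n:ℕ) : ℤ) := key
  omega

end Tau

section Iset
variable {k n r : ℕ}

/-- The "interval" of `r` elements whose `tau`-values are `s, s+1, …, s+r-1` mod `kn`. -/
def Iset (k n r s : ℕ) : Finset (ℕ × ℕ) := (Finset.range r).image fun i => iota k n (s + i)

lemma iota_fst_inj (hk : 0 < k) {s i j : ℕ} (hi : i < k) (hj : j < k)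
    (h : (iota k n (s+i)).1 = (iota k n (s+j)).1) : i = j := by
  have h' : mod1 ((s+i : ℕ) : ℤ) k = mod1 ((s+j : ℕ) : ℤ) k := h
  have hm := mod1_inj hk h'
  have hd : ((k:ℕ):ℤ) ∣ ((s+j : ℕ) : ℤ) - ((s+i : ℕ) : ℤ) := hm.dvd
  have habs : |((s+j : ℕ) : ℤ) - ((s+i : ℕ) : ℤ)| < ((k:ℕ):ℤ) := by
    rw [abs_lt]; push_cast; omega
  have := Int.eq_zero_of_abs_lt_dvd hd habs
  omega

lemma iota_fst_eq (t : ℕ) : (iota k n t).1 = mod1 (t : ℤ) k := rfl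

lemma iota_snd_eq (t : ℕ) :
    (iota k n t).2 = mod1 (((t : ℤ) - mod1 (t : ℤ) k) / k + mod1 (t : ℤ) k) n := rfl

set_option maxHeartbeats 1000000 in
lemma iota_snd_inj (hk : 0 < k) (hn : 0 < n) (hkn : k ≤ n) {s i j : ℕ}
    (hi : i + 1 < k) (hj : j + 1 < k)
    (h : (iota k n (s+i)).2 = (iota k n (s+j)).2) : i = j := by
  -- general auxiliary claim for j < i
  have aux : ∀ i j : ℕ, i + 1 < k → j < i →
      (iota k n (s+i)).2 ≠ (iota k n (s+j)).2 := by
    intro i j hi hij h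
    rw [iota_snd_eq, iota_snd_eq] at h
    set xi := mod1 ((s+i : ℕ) : ℤ) k with hxi
    set xj := mod1 ((s+j : ℕ) : ℤ) k with hxj
    set qi : ℤ := (((s+i : ℕ) : ℤ) - xi) / k with hqi
    set qj : ℤ := (((s+j : ℕ) : ℤ) - xj) / k with hqj
    have hkqi : (k:ℤ) * qi = ((s+i : ℕ) : ℤ) - xi :=
      Int.mul_ediv_cancel' (mod1_modeq _ hk).dvd
    have hkqj : (k:ℤ) * qj = ((s+j : ℕ) : ℤ) - xj :=
      Int.mul_ediv_cancel' (mod1_modeq _ hk).dvd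
    have h' : mod1 (qi + xi) n = mod1 (qj + xj) n := h
    clear h
    have hD : ((n:ℕ):ℤ) ∣ (qj + xj) - (qi + xi) := (mod1_inj hn h').dvd
    set D : ℤ := (qj + xj) - (qi + xi) with hDdef
    -- k * D = (j - i) + (k-1) * (xj - xi)
    have hkD : (k:ℤ) * D = ((j:ℤ) - i) + ((k:ℤ) - 1) * ((xj:ℤ) - xi) := by
      have : (k:ℤ) * D = (k:ℤ) * (qj + xj) - (k:ℤ) * (qi + xi) := by ring
      rw [this, mul_add, mul_add, hkqi, hkqj]
      push_cast
      ring
    -- xj - xi ≡ j - i mod k, both x's in [1,k]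
    have hbi := mod1_bounds ((s+i : ℕ) : ℤ) hk
    have hbj := mod1_bounds ((s+j : ℕ) : ℤ) hk
    have hxd : ((k:ℕ):ℤ) ∣ ((xj:ℤ) - xi) - ((j:ℤ) - i) := by
      have h1 := (mod1_modeq ((s+i : ℕ) : ℤ) hk)
      have h2 := (mod1_modeq ((s+j : ℕ) : ℤ) hk)
      have := (h2.sub h1).dvd
      have h3 : ((s+i:ℕ):ℤ) - ((s+j:ℕ):ℤ) = (i:ℤ) - j := by push_cast; ring
      rcases (h2.sub h1).dvd with ⟨c, hc⟩
      exact ⟨-c, by push_cast at hc ⊢; linarith [hc]⟩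
    -- hence xj - xi = (j-i) or (j-i) + k
    have hcase : (xj:ℤ) - xi = (j:ℤ) - i ∨ (xj:ℤ) - xi = (j:ℤ) - i + k := by
      rcases hxd with ⟨c, hc⟩
      have hxi1 : 1 ≤ (xi:ℤ) := by exact_mod_cast hbi.1
      have hxi2 : (xi:ℤ) ≤ k := by exact_mod_cast hbi.2
      have hxj1 : 1 ≤ (xj:ℤ) := by exact_mod_cast hbj.1
      have hxj2 : (xj:ℤ) ≤ k := by exact_mod_cast hbj.2
      have hji : (j:ℤ) - i ≤ -1 := by
        have : (j:ℤ) < i := by exact_mod_cast hij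
        omega
      have hji2 : -(k:ℤ) + 2 ≤ (j:ℤ) - i := by
        have : (i:ℤ) + 1 < k := by exact_mod_cast hi
        omega
      have hc0 : c = 0 ∨ c = 1 := by
        push_cast at hc
        rcases lt_trichotomy c 0 with h0|h0|h0
        · exfalso; nlinarith
        · left; exact h0
        · rcases lt_trichotomy c 1 with h1|h1|h1
          · omega
          · right; exact h1
          · exfalso; nlinarith
      rcases hc0 with h0|h0 <;> [left; right] <;> (push_cast at hc; rw [h0] at hc; linarith)
    have hk1 : (1:ℤ) ≤ k := by exact_mod_cast hk
    have hkn' : (k:ℤ) ≤ n := by exact_mod_cast hkn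
    have hji : (j:ℤ) - i ≤ -1 := by
      have : (j:ℤ) < i := by exact_mod_cast hij; 
      omega
    have hji2 : -(k:ℤ) + 2 ≤ (j:ℤ) - i := by
      have : (i:ℤ) + 1 < k := by exact_mod_cast hi
      omega
    rcases hcase with hc|hc
    · -- D = j - i, 0 < |D| < n
      have hDeq : D = (j:ℤ) - i := by
        have : (k:ℤ) * D = (k:ℤ) * ((j:ℤ) - i) := by rw [hkD, hc]; ring
        exact mul_left_cancel₀ (by omega) this
      have : D = 0 := Int.eq_zero_of_abs_lt_dvd hD (by rw [abs_lt]; omega)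
      omega
    ·
      have hDeq : D = (j:ℤ) - i + (k - 1) := by
        have : (k:ℤ) * D = (k:ℤ) * ((j:ℤ) - i + (k-1)) := by rw [hkD, hc]; ring
        exact mul_left_cancel₀ (by omega) this
      have : D = 0 := Int.eq_zero_of_abs_lt_dvd hD (by rw [abs_lt]; omega)
      omega
  rcases Nat.lt_trichotomy i j with h'|h'|h'
  · exact absurd h.symm (aux j i hj h')
  · exact h'
  · exact absurd h (aux i j hi h')

end Iset

section IsetProps
variable {k n r : ℕ}

lemma Iset_subset_box (hk : 0 < k) (hn : 0 < n) (s : ℕ) :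
    Iset k n r s ⊆ Finset.Icc 1 k ×ˢ Finset.Icc 1 n := by
  intro p hp
  simp only [Iset, Finset.mem_image] at hp
  obtain ⟨i, _, rfl⟩ := hp
  exact iota_mem_box hk hn _

lemma Iset_mem_genPerms (hr1 : 1 ≤ r) (hrk : r + 1 ≤ k) (hkn : k ≤ n) (s : ℕ) :
    Iset k n r s ∈ genPerms k r n := by
  have hk : 0 < k := by omega
  have hn : 0 < n := by omega
  have hfst : ∀ p ∈ Iset k n r s, ∀ q ∈ Iset k n r s, p.1 = q.1 → p = q := by
    intro p hp q hq hpq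
    simp only [Iset, Finset.mem_image, Finset.mem_range] at hp hq
    obtain ⟨i, hi, rfl⟩ := hp
    obtain ⟨j, hj, rfl⟩ := hq
    have : i = j := iota_fst_inj hk (by omega) (by omega) hpq
    rw [this]
  have hsnd : ∀ p ∈ Iset k n r s, ∀ q ∈ Iset k n r s, p.2 = q.2 → p = q := by
    intro p hp q hq hpq
    simp only [Iset, Finset.mem_image, Finset.mem_range] at hp hq
    obtain ⟨i, hi, rfl⟩ := hp
    obtain ⟨j, hj, rfl⟩ := hq
    have : i = j := iota_snd_inj hk hn hkn (by omega) (by omega) hpq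
    rw [this]
  have hcard : (Iset k n r s).card = r := by
    rw [Iset, Finset.card_image_of_injOn, Finset.card_range]
    intro i hi j hj hij
    simp only [Finset.mem_coe, Finset.mem_range] at hi hj
    exact iota_fst_inj hk (by omega) (by omega) (congrArg Prod.fst hij)
  simp only [genPerms, Finset.mem_filter, Finset.mem_powerset]
  exact ⟨Iset_subset_box hk hn s, hcard, hfst, hsnd⟩

lemma Iset_image_tau (hk : 0 < k) (hn : 0 < n) (s : ℕ) :
    (Iset k n r s).image (fun p => tau k n p % (k * n)) = cyc (k * n) s r := by
  rw [Iset, Finset.image_image, cyc]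
  exact Finset.image_congr fun i _ => tau_iota hk hn (s + i)

lemma cyc_mod_self (m s r : ℕ) : cyc m s r = cyc m (s % m) r := by
  unfold cyc
  apply Finset.image_congr
  intro i _
  show (s + i) % m = (s % m + i) % m
  conv_lhs => rw [Nat.add_mod]
  conv_rhs => rw [Nat.add_mod, Nat.mod_mod_of_dvd s dvd_rfl]

lemma cyc_start_unique {m s s' r : ℕ} (h0 : 0 < r) (hrm : r < m)
    (h : cyc m s r = cyc m s' r) : s % m = s' % m := by
  have hm : 0 < m := by omega
  have hmem : s' % m ∈ cyc m s r := by
    rw [h]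
    simp only [cyc, Finset.mem_image, Finset.mem_range]
    exact ⟨0, h0, by rw [Nat.add_zero]⟩
  simp only [cyc, Finset.mem_image, Finset.mem_range] at hmem
  obtain ⟨i, hi, hieq⟩ := hmem
  rcases Nat.eq_zero_or_pos i with rfl|hipos
  · rw [← hieq, Nat.add_zero]
  · exfalso
    have hmem2 : (s + (i-1)) % m ∈ cyc m s' r := by
      rw [← h]
      simp only [cyc, Finset.mem_image, Finset.mem_range]
      exact ⟨i - 1, by omega, rfl⟩
    simp only [cyc, Finset.mem_image, Finset.mem_range] at hmem2
    obtain ⟨j, hj, hjeq⟩ := hmem2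
    -- s + i ≡ s' and s' + j ≡ s + (i-1) mod m
    have e1 : s + i ≡ s' [MOD m] := hieq
    have e2 : s' + j ≡ s + (i-1) [MOD m] := hjeq
    have e3 : s + (i - 1) + (j + 1) ≡ s + (i - 1) [MOD m] := by
      calc s + (i-1) + (j+1) = (s + i) + j := by omega
        _ ≡ s' + j [MOD m] := e1.add_right j
        _ ≡ s + (i-1) [MOD m] := e2
    have e4 : (m:ℤ) ∣ ((j:ℤ) + 1) := by
      have := (Nat.modEq_iff_dvd' (by omega : s + (i-1) ≤ s + (i-1) + (j+1))).mp e3.symm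
      have h5 : s + (i-1) + (j+1) - (s + (i-1)) = j + 1 := by omega
      rw [h5] at this
      exact_mod_cast this
    have : ((m:ℕ):ℤ) ∣ ((j:ℤ) + 1) := e4
    have habs : |(j:ℤ) + 1| < ((m:ℕ):ℤ) := by rw [abs_lt]; push_cast; omega
    have := Int.eq_zero_of_abs_lt_dvd this habs
    omega

/-- Characterization: a subset `Q` of the box with `r` elements has `tau`-image a cyclic
interval starting at `s` iff `Q = Iset k n r s`. -/
lemma image_eq_cyc_iff (hr1 : 1 ≤ r) (hrk : r + 1 ≤ k) (hkn : k ≤ n)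
    {Q : Finset (ℕ × ℕ)} (hQ : Q ⊆ Finset.Icc 1 k ×ˢ Finset.Icc 1 n) (hcard : Q.card = r)
    (s : ℕ) :
    Q.image (fun p => tau k n p % (k * n)) = cyc (k * n) s r ↔ Q = Iset k n r s := by
  have hk : 0 < k := by omega
  have hn : 0 < n := by omega
  constructor
  · intro h
    have hsub : Q ⊆ Iset k n r s := by
      intro q hq
      have : tau k n q % (k * n) ∈ cyc (k*n) s r := by
        rw [← h]; exact Finset.mem_image_of_mem _ hq
      rw [← Iset_image_tau hk hn s] at this
      simp only [Finset.mem_image] at this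
      obtain ⟨p, hp, hpq⟩ := this
      have : p = q := tau_inj_mod hk hn (Iset_subset_box hk hn s hp) (hQ hq) hpq
      rwa [← this]
    have hle : (Iset k n r s).card ≤ Q.card := by
      rw [hcard, Iset]
      exact le_trans Finset.card_image_le (by rw [Finset.card_range])
    exact Finset.eq_of_subset_of_card_le hsub hle
  · intro h
    rw [h]
    exact Iset_image_tau hk hn s

end IsetProps

section LiftPerm
variable {k : ℕ}

lemma liftPerm_of_mem (φ : Equiv.Perm (Fin k)) {x : ℕ} (h1 : 1 ≤ x) (h2 : x ≤ k) :
    liftPerm k φ x = (φ ⟨x - 1, by omega⟩).val + 1 := by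
  rw [liftPerm, dif_pos ⟨h1, by omega⟩]

lemma liftPerm_of_not_mem (φ : Equiv.Perm (Fin k)) {x : ℕ} (h : ¬(1 ≤ x ∧ x ≤ k)) :
    liftPerm k φ x = x := by
  rw [liftPerm, dif_neg (by omega)]

lemma liftPerm_mem (φ : Equiv.Perm (Fin k)) {x : ℕ} (h1 : 1 ≤ x) (h2 : x ≤ k) :
    1 ≤ liftPerm k φ x ∧ liftPerm k φ x ≤ k := by
  rw [liftPerm_of_mem φ h1 h2]
  have := (φ ⟨x - 1, by omega⟩).isLt
  omega

lemma liftPerm_liftPerm_symm (φ : Equiv.Perm (Fin k)) (x : ℕ) :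
    liftPerm k φ (liftPerm k φ.symm x) = x := by
  by_cases h : 1 ≤ x ∧ x ≤ k
  · have h1 := liftPerm_mem φ.symm h.1 h.2
    rw [liftPerm_of_mem φ.symm h.1 h.2] at h1 ⊢
    rw [liftPerm_of_mem φ (by omega) (by omega)]
    have he : (⟨(φ.symm ⟨x - 1, by omega⟩).val + 1 - 1, by omega⟩ : Fin k) =
        φ.symm ⟨x - 1, by omega⟩ := by
      apply Fin.ext; simp
    rw [he, Equiv.apply_symm_apply]
    show x - 1 + 1 = x
    omega
  · rw [liftPerm_of_not_mem φ.symm h, liftPerm_of_not_mem φ h]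

lemma liftPerm_symm_liftPerm (φ : Equiv.Perm (Fin k)) (x : ℕ) :
    liftPerm k φ.symm (liftPerm k φ x) = x := by
  have := liftPerm_liftPerm_symm φ.symm x
  rwa [Equiv.symm_symm] at this

lemma liftPerm_injective (φ : Equiv.Perm (Fin k)) : Function.Injective (liftPerm k φ) :=
  Function.LeftInverse.injective (liftPerm_symm_liftPerm φ)

/-- `liftPerm` as an equivalence of `ℕ`. -/
def liftEquiv (k : ℕ) (φ : Equiv.Perm (Fin k)) : Equiv.Perm ℕ where
  toFun := liftPerm k φ
  invFun := liftPerm k φ.symm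
  left_inv := liftPerm_symm_liftPerm φ
  right_inv := liftPerm_liftPerm_symm φ

end LiftPerm

section Counting
variable {k n r : ℕ}

lemma genPerms_spec {A : Finset (ℕ × ℕ)} (h : A ∈ genPerms k r n) :
    A ⊆ Finset.Icc 1 k ×ˢ Finset.Icc 1 n ∧ A.card = r ∧
      (∀ p ∈ A, ∀ q ∈ A, p.1 = q.1 → p = q) ∧ (∀ p ∈ A, ∀ q ∈ A, p.2 = q.2 → p = q) := by
  simpa [genPerms, Finset.mem_filter, Finset.mem_powerset, and_assoc] using h

lemma card_fin_filter {k : ℕ} {X : Finset ℕ} (hX : X ⊆ Finset.Icc 1 k) :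
    Fintype.card {x : Fin k // x.val + 1 ∈ X} = X.card := by
  rw [Fintype.card_subtype]
  apply Finset.card_bij (fun x _ => x.val + 1)
  · intro a ha
    simpa using (Finset.mem_filter.mp ha).2
  · intro a _ b _ hab
    exact Fin.ext (by omega)
  · intro y hy
    have h1 : 1 ≤ y ∧ y ≤ k := by simpa [Finset.mem_Icc] using hX hy
    refine ⟨⟨y - 1, by omega⟩, Finset.mem_filter.mpr ⟨Finset.mem_univ _, ?_⟩, by simp; omega⟩
    simpa using (show y - 1 + 1 = y by omega) ▸ hy

/-- The joint action of a pair of permutations on `[k] × [n]`. -/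
def pairMap (k n : ℕ) (φ : Equiv.Perm (Fin k)) (ψ : Equiv.Perm (Fin n)) (p : ℕ × ℕ) : ℕ × ℕ :=
  (liftPerm k φ p.1, liftPerm n ψ p.2)

lemma pairMap_injective (φ : Equiv.Perm (Fin k)) (ψ : Equiv.Perm (Fin n)) :
    Function.Injective (pairMap k n φ ψ) := by
  intro p q h
  rw [Prod.ext_iff] at h ⊢
  exact ⟨liftPerm_injective φ h.1, liftPerm_injective ψ h.2⟩

lemma count_pairs (hr1 : 1 ≤ r) (hrk : r + 1 ≤ k) (hkn : k ≤ n)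
    (A B : Finset (ℕ × ℕ)) (hA : A ∈ genPerms k r n) (hB : B ∈ genPerms k r n) :
    (Finset.univ.filter fun fp : Equiv.Perm (Fin k) × Equiv.Perm (Fin n) =>
        A.image (pairMap k n fp.1 fp.2) = B).card
      = r.factorial * ((k - r).factorial * (n - r).factorial) := by
  classical
  obtain ⟨hAbox, hAcard, hAfst, hAsnd⟩ := genPerms_spec hA
  obtain ⟨hBbox, hBcard, hBfst, hBsnd⟩ := genPerms_spec hB
  have hk : 0 < k := by omega
  have hn : 0 < n := by omega
  set Xa := A.image Prod.fst with hXa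
  set Xb := B.image Prod.fst with hXb
  set Ya := A.image Prod.snd with hYa
  set Yb := B.image Prod.snd with hYb
  have hXak : Xa ⊆ Finset.Icc 1 k := by
    intro x hx; obtain ⟨p, hp, rfl⟩ := Finset.mem_image.mp hx
    exact (Finset.mem_product.mp (hAbox hp)).1
  have hXbk : Xb ⊆ Finset.Icc 1 k := by
    intro x hx; obtain ⟨p, hp, rfl⟩ := Finset.mem_image.mp hx
    exact (Finset.mem_product.mp (hBbox hp)).1
  have hYan : Ya ⊆ Finset.Icc 1 n := by
    intro x hx; obtain ⟨p, hp, rfl⟩ := Finset.mem_image.mp hx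
    exact (Finset.mem_product.mp (hAbox hp)).2
  have hYbn : Yb ⊆ Finset.Icc 1 n := by
    intro x hx; obtain ⟨p, hp, rfl⟩ := Finset.mem_image.mp hx
    exact (Finset.mem_product.mp (hBbox hp)).2
  have hXacard : Xa.card = r := by
    rw [hXa, Finset.card_image_of_injOn, hAcard]
    intro p hp q hq h; exact hAfst p (by simpa using hp) q (by simpa using hq) h
  have hXbcard : Xb.card = r := by
    rw [hXb, Finset.card_image_of_injOn, hBcard]
    intro p hp q hq h; exact hBfst p (by simpa using hp) q (by simpa using hq) h
  have hYacard : Ya.card = r := by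
    rw [hYa, Finset.card_image_of_injOn, hAcard]
    intro p hp q hq h; exact hAsnd p (by simpa using hp) q (by simpa using hq) h
  have hYbcard : Yb.card = r := by
    rw [hYb, Finset.card_image_of_injOn, hBcard]
    intro p hp q hq h; exact hBsnd p (by simpa using hp) q (by simpa using hq) h
  -- membership transfer for first coordinates
  have hmemX : ∀ (φ : Equiv.Perm (Fin k)) (ψ : Equiv.Perm (Fin n)),
      A.image (pairMap k n φ ψ) = B → ∀ x : Fin k, (x.val + 1 ∈ Xa ↔ (φ x).val + 1 ∈ Xb) := by
    intro φ ψ himg x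
    constructor
    · intro hx
      obtain ⟨a, ha, ha1⟩ := Finset.mem_image.mp hx
      have haB : pairMap k n φ ψ a ∈ B := himg ▸ Finset.mem_image_of_mem _ ha
      have hab := Finset.mem_Icc.mp (Finset.mem_product.mp (hAbox ha)).1
      have hfe : (pairMap k n φ ψ a).1 = (φ x).val + 1 := by
        show liftPerm k φ a.1 = _
        rw [liftPerm_of_mem φ hab.1 hab.2]
        have : (⟨a.1 - 1, by omega⟩ : Fin k) = x := Fin.ext (show a.1 - 1 = x.val by omega)
        rw [this]
      exact hfe ▸ Finset.mem_image_of_mem Prod.fst haB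
    · intro hx
      obtain ⟨b, hb, hb1⟩ := Finset.mem_image.mp hx
      rw [← himg] at hb
      obtain ⟨a, ha, rfl⟩ := Finset.mem_image.mp hb
      have hab := Finset.mem_Icc.mp (Finset.mem_product.mp (hAbox ha)).1
      have h1 : liftPerm k φ a.1 = (φ x).val + 1 := hb1
      rw [liftPerm_of_mem φ hab.1 hab.2] at h1
      have h2 : φ ⟨a.1 - 1, by omega⟩ = φ x := Fin.ext (by omega)
      have h3 : a.1 = x.val + 1 := by
        have h4 := congrArg Fin.val (φ.injective h2)
        simp only [Fin.val_mk] at h4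
        omega
      exact h3 ▸ Finset.mem_image_of_mem Prod.fst ha
  have hmemY : ∀ (φ : Equiv.Perm (Fin k)) (ψ : Equiv.Perm (Fin n)),
      A.image (pairMap k n φ ψ) = B → ∀ y : Fin n, (y.val + 1 ∈ Ya ↔ (ψ y).val + 1 ∈ Yb) := by
    intro φ ψ himg y
    constructor
    · intro hy
      obtain ⟨a, ha, ha1⟩ := Finset.mem_image.mp hy
      have haB : pairMap k n φ ψ a ∈ B := himg ▸ Finset.mem_image_of_mem _ ha
      have hab := Finset.mem_Icc.mp (Finset.mem_product.mp (hAbox ha)).2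
      have hfe : (pairMap k n φ ψ a).2 = (ψ y).val + 1 := by
        show liftPerm n ψ a.2 = _
        rw [liftPerm_of_mem ψ hab.1 hab.2]
        have : (⟨a.2 - 1, by omega⟩ : Fin n) = y := Fin.ext (show a.2 - 1 = y.val by omega)
        rw [this]
      exact hfe ▸ Finset.mem_image_of_mem Prod.snd haB
    · intro hy
      obtain ⟨b, hb, hb1⟩ := Finset.mem_image.mp hy
      rw [← himg] at hb
      obtain ⟨a, ha, rfl⟩ := Finset.mem_image.mp hb
      have hab := Finset.mem_Icc.mp (Finset.mem_product.mp (hAbox ha)).2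
      have h1 : liftPerm n ψ a.2 = (ψ y).val + 1 := hb1
      rw [liftPerm_of_mem ψ hab.1 hab.2] at h1
      have h2 : ψ ⟨a.2 - 1, by omega⟩ = ψ y := Fin.ext (by omega)
      have h3 : a.2 = y.val + 1 := by
        have h4 := congrArg Fin.val (ψ.injective h2)
        simp only [Fin.val_mk] at h4
        omega
      exact h3 ▸ Finset.mem_image_of_mem Prod.snd ha
  -- membership transfer for whole pairs
  have hmemA : ∀ (φ : Equiv.Perm (Fin k)) (ψ : Equiv.Perm (Fin n)),
      A.image (pairMap k n φ ψ) = B → ∀ p : ℕ × ℕ, (p ∈ A ↔ pairMap k n φ ψ p ∈ B) := by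
    intro φ ψ himg p
    constructor
    · intro hp; exact himg ▸ Finset.mem_image_of_mem _ hp
    · intro hp
      rw [← himg] at hp
      obtain ⟨a, ha, haeq⟩ := Finset.mem_image.mp hp
      rwa [← pairMap_injective φ ψ haeq]
  -- the two sides as types
  rw [← Fintype.card_subtype]
  have hcardT : Fintype.card
      (({p // p ∈ A} ≃ {p // p ∈ B}) ×
        (({x : Fin k // ¬ x.val + 1 ∈ Xa} ≃ {x : Fin k // ¬ x.val + 1 ∈ Xb}) ×
         ({y : Fin n // ¬ y.val + 1 ∈ Ya} ≃ {y : Fin n // ¬ y.val + 1 ∈ Yb})))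
      = r.factorial * ((k - r).factorial * (n - r).factorial) := by
    rw [Fintype.card_prod, Fintype.card_prod]
    congr 1
    · rw [Fintype.card_equiv (Finset.equivOfCardEq (by rw [hAcard, hBcard]))]
      rw [Fintype.card_coe, hAcard]
    congr 1
    · have c1 : Fintype.card {x : Fin k // ¬ x.val + 1 ∈ Xa} = k - r := by
        rw [Fintype.card_subtype_compl, card_fin_filter hXak, hXacard, Fintype.card_fin]
      have c2 : Fintype.card {x : Fin k // ¬ x.val + 1 ∈ Xb} = k - r := by
        rw [Fintype.card_subtype_compl, card_fin_filter hXbk, hXbcard, Fintype.card_fin]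
      rw [Fintype.card_equiv (Fintype.equivOfCardEq (by rw [c1, c2])), c1]
    · have c1 : Fintype.card {y : Fin n // ¬ y.val + 1 ∈ Ya} = n - r := by
        rw [Fintype.card_subtype_compl, card_fin_filter hYan, hYacard, Fintype.card_fin]
      have c2 : Fintype.card {y : Fin n // ¬ y.val + 1 ∈ Yb} = n - r := by
        rw [Fintype.card_subtype_compl, card_fin_filter hYbn, hYbcard, Fintype.card_fin]
      rw [Fintype.card_equiv (Fintype.equivOfCardEq (by rw [c1, c2])), c1]
  rw [← hcardT]
  -- construct a bijection
  apply Fintype.card_of_bijective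
    (f := fun fp : {fp : Equiv.Perm (Fin k) × Equiv.Perm (Fin n) //
        A.image (pairMap k n fp.1 fp.2) = B} =>
      (((liftEquiv k fp.1.1).prodCongr (liftEquiv n fp.1.2)).subtypeEquiv
          (hmemA fp.1.1 fp.1.2 fp.2),
        fp.1.1.subtypeEquiv (fun x => not_congr (hmemX fp.1.1 fp.1.2 fp.2 x)),
        fp.1.2.subtypeEquiv (fun y => not_congr (hmemY fp.1.1 fp.1.2 fp.2 y))))
  constructor
  · -- injectivity
    rintro ⟨⟨φ1, ψ1⟩, h1⟩ ⟨⟨φ2, ψ2⟩, h2⟩ heq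
    simp only [Prod.mk.injEq] at heq
    obtain ⟨he, hu, hv⟩ := heq
    apply Subtype.ext
    simp only [Prod.mk.injEq]
    constructor
    · ext x
      by_cases hx : x.val + 1 ∈ Xa
      · obtain ⟨a, ha, ha1⟩ := Finset.mem_image.mp hx
        have h5 := DFunLike.congr_fun he (⟨a, ha⟩ : {p // p ∈ A})
        replace h5 := congrArg Subtype.val h5
        have h6 : liftPerm k φ1 a.1 = liftPerm k φ2 a.1 := congrArg Prod.fst h5
        have hab := Finset.mem_Icc.mp (Finset.mem_product.mp (hAbox ha)).1
        rw [liftPerm_of_mem φ1 hab.1 hab.2, liftPerm_of_mem φ2 hab.1 hab.2] at h6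
        have hx' : x = ⟨a.1 - 1, by omega⟩ := Fin.ext (show x.val = a.1 - 1 by omega)
        rw [hx']
        exact Nat.succ_injective h6
      · have h5 := DFunLike.congr_fun hu (⟨x, hx⟩ : {x : Fin k // ¬ x.val + 1 ∈ Xa})
        simp only [Equiv.subtypeEquiv_apply, Subtype.mk.injEq] at h5
        exact congrArg Fin.val h5
    · ext y
      by_cases hy : y.val + 1 ∈ Ya
      · obtain ⟨a, ha, ha1⟩ := Finset.mem_image.mp hy
        have h5 := DFunLike.congr_fun he (⟨a, ha⟩ : {p // p ∈ A})
        replace h5 := congrArg Subtype.val h5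
        have h6 : liftPerm n ψ1 a.2 = liftPerm n ψ2 a.2 := congrArg Prod.snd h5
        have hab := Finset.mem_Icc.mp (Finset.mem_product.mp (hAbox ha)).2
        rw [liftPerm_of_mem ψ1 hab.1 hab.2, liftPerm_of_mem ψ2 hab.1 hab.2] at h6
        have hy' : y = ⟨a.2 - 1, by omega⟩ := Fin.ext (show y.val = a.2 - 1 by omega)
        rw [hy']
        exact Nat.succ_injective h6
      · have h5 := DFunLike.congr_fun hv (⟨y, hy⟩ : {y : Fin n // ¬ y.val + 1 ∈ Ya})
        simp only [Equiv.subtypeEquiv_apply, Subtype.mk.injEq] at h5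
        exact congrArg Fin.val h5
  · -- surjectivity
    rintro ⟨e, u, v⟩
    have hAbounds : ∀ a ∈ A, 1 ≤ a.1 ∧ a.1 ≤ k ∧ 1 ≤ a.2 ∧ a.2 ≤ n := by
      intro a ha
      have h1 := Finset.mem_Icc.mp (Finset.mem_product.mp (hAbox ha)).1
      have h2 := Finset.mem_Icc.mp (Finset.mem_product.mp (hAbox ha)).2
      exact ⟨h1.1, h1.2, h2.1, h2.2⟩
    have hBbounds : ∀ b ∈ B, 1 ≤ b.1 ∧ b.1 ≤ k ∧ 1 ≤ b.2 ∧ b.2 ≤ n := by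
      intro b hb
      have h1 := Finset.mem_Icc.mp (Finset.mem_product.mp (hBbox hb)).1
      have h2 := Finset.mem_Icc.mp (Finset.mem_product.mp (hBbox hb)).2
      exact ⟨h1.1, h1.2, h2.1, h2.2⟩
    have hexA : ∀ x : Fin k, x.val + 1 ∈ Xa → ∃! a, a ∈ A ∧ a.1 = x.val + 1 := by
      intro x hx
      obtain ⟨a, ha, ha1⟩ := Finset.mem_image.mp hx
      exact ⟨a, ⟨ha, ha1⟩, fun b hb => hAfst b hb.1 a ha (hb.2.trans ha1.symm)⟩
    have hexA2 : ∀ y : Fin n, y.val + 1 ∈ Ya → ∃! a, a ∈ A ∧ a.2 = y.val + 1 := by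
      intro y hy
      obtain ⟨a, ha, ha1⟩ := Finset.mem_image.mp hy
      exact ⟨a, ⟨ha, ha1⟩, fun b hb => hAsnd b hb.1 a ha (hb.2.trans ha1.symm)⟩
    set φf : Fin k → Fin k := fun x =>
      if hx : x.val + 1 ∈ Xa then
        ⟨(e ⟨A.choose (fun a => a.1 = x.val + 1) (hexA x hx),
            Finset.choose_mem _ _ _⟩).1.1 - 1, by
          have := (hBbounds _ (e ⟨A.choose (fun a => a.1 = x.val + 1) (hexA x hx),
            Finset.choose_mem _ _ _⟩).2).2.1
          omega⟩
      else (u ⟨x, hx⟩).1 with hφf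
    set ψf : Fin n → Fin n := fun y =>
      if hy : y.val + 1 ∈ Ya then
        ⟨(e ⟨A.choose (fun a => a.2 = y.val + 1) (hexA2 y hy),
            Finset.choose_mem _ _ _⟩).1.2 - 1, by
          have := (hBbounds _ (e ⟨A.choose (fun a => a.2 = y.val + 1) (hexA2 y hy),
            Finset.choose_mem _ _ _⟩).2).2.2.2
          omega⟩
      else (v ⟨y, hy⟩).1 with hψf
    have φfpos : ∀ (x : Fin k) (hx : x.val + 1 ∈ Xa),
        (φf x).val + 1 = (e ⟨A.choose (fun a => a.1 = x.val + 1) (hexA x hx),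
            Finset.choose_mem _ _ _⟩).1.1 := by
      intro x hx
      rw [hφf]
      simp only [dif_pos hx]
      have := (hBbounds _ (e ⟨A.choose (fun a => a.1 = x.val + 1) (hexA x hx),
        Finset.choose_mem _ _ _⟩).2).1
      omega
    have ψfpos : ∀ (y : Fin n) (hy : y.val + 1 ∈ Ya),
        (ψf y).val + 1 = (e ⟨A.choose (fun a => a.2 = y.val + 1) (hexA2 y hy),
            Finset.choose_mem _ _ _⟩).1.2 := by
      intro y hy
      rw [hψf]
      simp only [dif_pos hy]
      have := (hBbounds _ (e ⟨A.choose (fun a => a.2 = y.val + 1) (hexA2 y hy),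
        Finset.choose_mem _ _ _⟩).2).2.2.1
      omega
    have φfneg : ∀ (x : Fin k) (hx : ¬ x.val + 1 ∈ Xa), φf x = (u ⟨x, hx⟩).1 := by
      intro x hx; rw [hφf]; simp only [dif_neg hx]
    have ψfneg : ∀ (y : Fin n) (hy : ¬ y.val + 1 ∈ Ya), ψf y = (v ⟨y, hy⟩).1 := by
      intro y hy; rw [hψf]; simp only [dif_neg hy]
    have φfmem : ∀ (x : Fin k) (hx : x.val + 1 ∈ Xa), (φf x).val + 1 ∈ Xb := by
      intro x hx
      rw [φfpos x hx]
      exact Finset.mem_image_of_mem Prod.fst (e _).2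
    have ψfmem : ∀ (y : Fin n) (hy : y.val + 1 ∈ Ya), (ψf y).val + 1 ∈ Yb := by
      intro y hy
      rw [ψfpos y hy]
      exact Finset.mem_image_of_mem Prod.snd (e _).2
    have φinj : Function.Injective φf := by
      intro x y hxy
      by_cases hx : x.val + 1 ∈ Xa <;> by_cases hy : y.val + 1 ∈ Xa
      · have h1 : (e ⟨A.choose (fun a => a.1 = x.val + 1) (hexA x hx),
            Finset.choose_mem _ _ _⟩).1.1 = (e ⟨A.choose (fun a => a.1 = y.val + 1) (hexA y hy),
            Finset.choose_mem _ _ _⟩).1.1 := by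
          rw [← φfpos x hx, ← φfpos y hy, hxy]
        have h2 := hBfst _ (e _).2 _ (e _).2 h1
        have h3 := e.injective (Subtype.ext h2)
        have h4 := congrArg (fun z : {p // p ∈ A} => z.val.1) h3
        have hpx : (A.choose (fun a => a.1 = x.val + 1) (hexA x hx)).1 = x.val + 1 :=
          Finset.choose_property (fun a : ℕ × ℕ => a.1 = x.val + 1) A (hexA x hx)
        have hpy : (A.choose (fun a => a.1 = y.val + 1) (hexA y hy)).1 = y.val + 1 :=
          Finset.choose_property (fun a : ℕ × ℕ => a.1 = y.val + 1) A (hexA y hy)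
        simp only at h4
        rw [hpx, hpy] at h4
        exact Fin.ext (by omega)
      · exfalso
        have := φfmem x hx
        rw [hxy, φfneg y hy] at this
        exact (u ⟨y, hy⟩).2 this
      · exfalso
        have := φfmem y hy
        rw [← hxy, φfneg x hx] at this
        exact (u ⟨x, hx⟩).2 this
      · rw [φfneg x hx, φfneg y hy] at hxy
        have := u.injective (Subtype.ext hxy)
        exact congrArg Subtype.val this
    have ψinj : Function.Injective ψf := by
      intro x y hxy
      by_cases hx : x.val + 1 ∈ Ya <;> by_cases hy : y.val + 1 ∈ Ya
      · have h1 : (e ⟨A.choose (fun a => a.2 = x.val + 1) (hexA2 x hx),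
            Finset.choose_mem _ _ _⟩).1.2 = (e ⟨A.choose (fun a => a.2 = y.val + 1) (hexA2 y hy),
            Finset.choose_mem _ _ _⟩).1.2 := by
          rw [← ψfpos x hx, ← ψfpos y hy, hxy]
        have h2 := hBsnd _ (e _).2 _ (e _).2 h1
        have h3 := e.injective (Subtype.ext h2)
        have h4 := congrArg (fun z : {p // p ∈ A} => z.val.2) h3
        have hpx : (A.choose (fun a => a.2 = x.val + 1) (hexA2 x hx)).2 = x.val + 1 :=
          Finset.choose_property (fun a : ℕ × ℕ => a.2 = x.val + 1) A (hexA2 x hx)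
        have hpy : (A.choose (fun a => a.2 = y.val + 1) (hexA2 y hy)).2 = y.val + 1 :=
          Finset.choose_property (fun a : ℕ × ℕ => a.2 = y.val + 1) A (hexA2 y hy)
        simp only at h4
        rw [hpx, hpy] at h4
        exact Fin.ext (by omega)
      · exfalso
        have := ψfmem x hx
        rw [hxy, ψfneg y hy] at this
        exact (v ⟨y, hy⟩).2 this
      · exfalso
        have := ψfmem y hy
        rw [← hxy, ψfneg x hx] at this
        exact (v ⟨x, hx⟩).2 this
      · rw [ψfneg x hx, ψfneg y hy] at hxy
        have := v.injective (Subtype.ext hxy)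
        exact congrArg Subtype.val this
    set φ : Equiv.Perm (Fin k) := Equiv.ofBijective φf (Finite.injective_iff_bijective.mp φinj)
      with hφ
    set ψ : Equiv.Perm (Fin n) := Equiv.ofBijective ψf (Finite.injective_iff_bijective.mp ψinj)
      with hψ
    have φapp : ∀ x, φ x = φf x := fun x => rfl
    have ψapp : ∀ y, ψ y = ψf y := fun y => rfl
    have key : ∀ a (ha : a ∈ A), pairMap k n φ ψ a = (e ⟨a, ha⟩).1 := by
      intro a ha
      have hb := hAbounds a ha
      have hx : ((⟨a.1 - 1, by omega⟩ : Fin k)).val + 1 ∈ Xa := by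
        show a.1 - 1 + 1 ∈ Xa
        rw [show a.1 - 1 + 1 = a.1 by omega]
        exact Finset.mem_image_of_mem Prod.fst ha
      have hy : ((⟨a.2 - 1, by omega⟩ : Fin n)).val + 1 ∈ Ya := by
        show a.2 - 1 + 1 ∈ Ya
        rw [show a.2 - 1 + 1 = a.2 by omega]
        exact Finset.mem_image_of_mem Prod.snd ha
      have hchx : A.choose (fun b => b.1 = ((⟨a.1 - 1, by omega⟩ : Fin k)).val + 1)
          (hexA _ hx) = a := by
        have h1 : A.choose (fun b => b.1 = ((⟨a.1 - 1, by omega⟩ : Fin k)).val + 1)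
            (hexA _ hx) ∈ A := Finset.choose_mem _ _ _
        have h2 : (A.choose (fun b => b.1 = ((⟨a.1 - 1, by omega⟩ : Fin k)).val + 1)
            (hexA _ hx)).1 = ((⟨a.1 - 1, by omega⟩ : Fin k)).val + 1 :=
          Finset.choose_property (fun b : ℕ × ℕ => b.1 = ((⟨a.1 - 1, by omega⟩ : Fin k)).val + 1)
            A (hexA _ hx)
        apply hAfst _ h1 a ha
        rw [h2]
        show a.1 - 1 + 1 = a.1
        omega
      have hchy : A.choose (fun b => b.2 = ((⟨a.2 - 1, by omega⟩ : Fin n)).val + 1)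
          (hexA2 _ hy) = a := by
        have h1 : A.choose (fun b => b.2 = ((⟨a.2 - 1, by omega⟩ : Fin n)).val + 1)
            (hexA2 _ hy) ∈ A := Finset.choose_mem _ _ _
        have h2 : (A.choose (fun b => b.2 = ((⟨a.2 - 1, by omega⟩ : Fin n)).val + 1)
            (hexA2 _ hy)).2 = ((⟨a.2 - 1, by omega⟩ : Fin n)).val + 1 :=
          Finset.choose_property (fun b : ℕ × ℕ => b.2 = ((⟨a.2 - 1, by omega⟩ : Fin n)).val + 1)
            A (hexA2 _ hy)
        apply hAsnd _ h1 a ha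
        rw [h2]
        show a.2 - 1 + 1 = a.2
        omega
      apply Prod.ext
      · show liftPerm k φ a.1 = _
        rw [liftPerm_of_mem φ hb.1 hb.2.1, φapp, φfpos _ hx]
        exact congrArg (fun z : {p // p ∈ A} => ((e z : {p // p ∈ B}) : ℕ × ℕ).1)
          (Subtype.ext hchx)
      · show liftPerm n ψ a.2 = _
        rw [liftPerm_of_mem ψ hb.2.2.1 hb.2.2.2, ψapp, ψfpos _ hy]
        exact congrArg (fun z : {p // p ∈ A} => ((e z : {p // p ∈ B}) : ℕ × ℕ).2)
          (Subtype.ext hchy)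
    have himg : A.image (pairMap k n φ ψ) = B := by
      apply Finset.eq_of_subset_of_card_le
      · intro b hb
        obtain ⟨a, ha, rfl⟩ := Finset.mem_image.mp hb
        rw [key a ha]
        exact (e ⟨a, ha⟩).2
      · rw [Finset.card_image_of_injective _ (pairMap_injective φ ψ), hAcard, hBcard]
    refine ⟨⟨(φ, ψ), himg⟩, ?_⟩
    refine Prod.ext ?_ (Prod.ext ?_ ?_)
    · refine Equiv.ext fun a => Subtype.ext ?_
      show pairMap k n φ ψ a.1 = ((e a : {p // p ∈ B}) : ℕ × ℕ)
      rw [key a.1 a.2]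
    · refine Equiv.ext fun x => Subtype.ext ?_
      show φ x.1 = ((u x : {x : Fin k // ¬ x.val + 1 ∈ Xb}) : Fin k)
      rw [φapp, φfneg x.1 x.2]
    · refine Equiv.ext fun y => Subtype.ext ?_
      show ψ y.1 = ((v y : {y : Fin n // ¬ y.val + 1 ∈ Yb}) : Fin n)
      rw [ψapp, ψfneg y.1 y.2]



end Counting

open scoped Classical in
/-- Each `P ∈ 𝒫_{k,r,n}` meets exactly `r!·(k-r)!·(n-r)!·kn` of the
orderings `τ_{φ,ψ}`, counted over pairs `(φ,ψ) ∈ S_k × S_n`. -/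
theorem count_orderings_met (k r n : ℕ) (hr1 : 1 ≤ r) (hr : r ≤ k - 1) (hkn : k ≤ n)
    (P : Finset (ℕ × ℕ)) (hP : P ∈ genPerms k r n) :
    ((Finset.univ : Finset (Equiv.Perm (Fin k) × Equiv.Perm (Fin n))).filter
        fun fp => Meets (k * n) (tauPerm k n fp.1 fp.2) P).card
      = r.factorial * (k - r).factorial * (n - r).factorial * (k * n) := by
  obtain ⟨hPbox, hPcard, hPfst, hPsnd⟩ := genPerms_spec hP
  have hrk : r + 1 ≤ k := by omega
  have hk : 0 < k := by omega
  have hn : 0 < n := by omega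
  have hkn' : k ≤ k * n := Nat.le_mul_of_pos_right k hn
  have hm : r < k * n := by omega
  have hmpos : 0 < k * n := by omega
  -- basic facts about the moved copy of P
  have hQbox : ∀ (φ : Equiv.Perm (Fin k)) (ψ : Equiv.Perm (Fin n)),
      P.image (pairMap k n φ.symm ψ.symm) ⊆ Finset.Icc 1 k ×ˢ Finset.Icc 1 n := by
    intro φ ψ q hq
    obtain ⟨p, hp, rfl⟩ := Finset.mem_image.mp hq
    have h1 := Finset.mem_Icc.mp (Finset.mem_product.mp (hPbox hp)).1
    have h2 := Finset.mem_Icc.mp (Finset.mem_product.mp (hPbox hp)).2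
    have h3 := liftPerm_mem φ.symm h1.1 h1.2
    have h4 := liftPerm_mem ψ.symm h2.1 h2.2
    rw [Finset.mem_product, Finset.mem_Icc, Finset.mem_Icc]
    exact ⟨⟨h3.1, h3.2⟩, ⟨h4.1, h4.2⟩⟩
  have hQcard : ∀ (φ : Equiv.Perm (Fin k)) (ψ : Equiv.Perm (Fin n)),
      (P.image (pairMap k n φ.symm ψ.symm)).card = r := by
    intro φ ψ
    rw [Finset.card_image_of_injective _ (pairMap_injective _ _), hPcard]
  -- the image of the tau values over the moved copy
  have himg : ∀ (φ : Equiv.Perm (Fin k)) (ψ : Equiv.Perm (Fin n)),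
      P.image (fun p => tauPerm k n φ ψ p % (k*n))
        = (P.image (pairMap k n φ.symm ψ.symm)).image (fun p => tau k n p % (k*n)) := by
    intro φ ψ
    rw [Finset.image_image]
    rfl
  have cond_iff : ∀ (φ : Equiv.Perm (Fin k)) (ψ : Equiv.Perm (Fin n)),
      Meets (k*n) (tauPerm k n φ ψ) P ↔
        ∃ s, s < k * n ∧ P.image (pairMap k n φ.symm ψ.symm) = Iset k n r s := by
    intro φ ψ
    unfold Meets
    rw [hPcard]
    constructor
    · rintro ⟨s, hs⟩
      rw [himg φ ψ] at hs
      refine ⟨s % (k*n), Nat.mod_lt _ hmpos, ?_⟩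
      rw [← image_eq_cyc_iff hr1 hrk hkn (hQbox φ ψ) (hQcard φ ψ) (s % (k*n))]
      rw [hs, cyc_mod_self]
    · rintro ⟨s, _, hs⟩
      refine ⟨s, ?_⟩
      rw [himg φ ψ]
      rw [image_eq_cyc_iff hr1 hrk hkn (hQbox φ ψ) (hQcard φ ψ) s]
      exact hs
  -- split the filter according to the starting position s
  have hsplit : ((Finset.univ : Finset (Equiv.Perm (Fin k) × Equiv.Perm (Fin n))).filter
        fun fp => Meets (k * n) (tauPerm k n fp.1 fp.2) P)
      = (Finset.range (k*n)).biUnion (fun s =>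
          (Finset.univ : Finset (Equiv.Perm (Fin k) × Equiv.Perm (Fin n))).filter
            fun fp => P.image (pairMap k n fp.1.symm fp.2.symm) = Iset k n r s) := by
    ext fp
    simp only [Finset.mem_biUnion, Finset.mem_filter, Finset.mem_univ, true_and,
      Finset.mem_range]
    rw [cond_iff fp.1 fp.2]
  rw [hsplit, Finset.card_biUnion]
  · -- evaluate each summand
    have hterm : ∀ s ∈ Finset.range (k*n),
        ((Finset.univ : Finset (Equiv.Perm (Fin k) × Equiv.Perm (Fin n))).filter
          fun fp => P.image (pairMap k n fp.1.symm fp.2.symm) = Iset k n r s).card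
        = r.factorial * ((k - r).factorial * (n - r).factorial) := by
      intro s _
      have hflip : ∀ fp : Equiv.Perm (Fin k) × Equiv.Perm (Fin n),
          (P.image (pairMap k n fp.1.symm fp.2.symm) = Iset k n r s)
            ↔ ((Iset k n r s).image (pairMap k n fp.1 fp.2) = P) := by
        intro fp
        constructor
        · intro h
          rw [← h, Finset.image_image]
          have hcomp : (pairMap k n fp.1 fp.2 ∘ pairMap k n fp.1.symm fp.2.symm) = id :=
            funext fun p => Prod.ext (liftPerm_liftPerm_symm _ _) (liftPerm_liftPerm_symm _ _)
          rw [hcomp, Finset.image_id]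
        · intro h
          rw [← h, Finset.image_image]
          have hcomp : (pairMap k n fp.1.symm fp.2.symm ∘ pairMap k n fp.1 fp.2) = id :=
            funext fun p => Prod.ext (liftPerm_symm_liftPerm _ _) (liftPerm_symm_liftPerm _ _)
          rw [hcomp, Finset.image_id]
      rw [Finset.filter_congr (fun fp _ => hflip fp)]
      have := count_pairs hr1 hrk hkn (Iset k n r s) P (Iset_mem_genPerms hr1 hrk hkn s) hP
      rw [← this]
    rw [Finset.sum_congr rfl hterm, Finset.sum_const, Finset.card_range, smul_eq_mul]
    ring
  · -- disjointness
    intro s hs t ht hst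
    rw [Function.onFun, Finset.disjoint_left]
    intro fp hfps hfpt
    simp only [Finset.mem_filter, Finset.mem_univ, true_and] at hfps hfpt
    have hIeq : Iset k n r s = Iset k n r t := by rw [← hfps, hfpt]
    have hcyc : cyc (k*n) s r = cyc (k*n) t r := by
      rw [← Iset_image_tau hk hn s, ← Iset_image_tau hk hn t, hIeq]
    have := cyc_start_unique hr1 hm hcyc
    rw [Nat.mod_eq_of_lt (Finset.mem_range.mp hs), Nat.mod_eq_of_lt (Finset.mem_range.mp ht)]
      at this
    exact hst this
end

section
/- Let k ≤ n, r ≤ k-1, and let σ be an r-good cyclic ordering of [k] × [n]. Then the number of members of P_{k,r,n} that meet σ is exactly kn. -/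
open Finset

lemma cyc_eq_mod (m s r : ℕ) : cyc m (s % m) r = cyc m s r := by
  unfold cyc
  apply Finset.image_congr
  intro i _
  simp [Nat.mod_add_mod]

lemma mem_cyc {m s r x : ℕ} : x ∈ cyc m s r ↔ ∃ i < r, (s + i) % m = x := by
  simp [cyc]

lemma cyc_card {m s r : ℕ} (h : r ≤ m) : (cyc m s r).card = r := by
  rw [cyc, Finset.card_image_of_injOn, Finset.card_range]
  intro i hi j hj hij
  simp only [Finset.coe_range, Set.mem_Iio] at hi hj
  have h1 : i ≡ j [MOD m] := Nat.ModEq.add_left_cancel' s hij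
  have : i % m = j % m := h1
  rw [Nat.mod_eq_of_lt (lt_of_lt_of_le hi h), Nat.mod_eq_of_lt (lt_of_lt_of_le hj h)] at this
  exact this

lemma cyc_subset_range {m s r : ℕ} (hm : 0 < m) : cyc m s r ⊆ Finset.range m := by
  intro x hx
  rcases mem_cyc.mp hx with ⟨i, _, rfl⟩
  exact Finset.mem_range.mpr (Nat.mod_lt _ hm)

lemma cyc_pred_not_mem {m s r : ℕ} (hrm : r < m) : (s + (m - 1)) % m ∉ cyc m s r := by
  intro hx
  rcases mem_cyc.mp hx with ⟨i, hi, hix⟩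
  have h1 : i ≡ m - 1 [MOD m] := Nat.ModEq.add_left_cancel' s hix
  have : i % m = (m - 1) % m := h1
  rw [Nat.mod_eq_of_lt (lt_trans hi hrm), Nat.mod_eq_of_lt (by omega)] at this
  omega

lemma cyc_inj {m s t r : ℕ} (hr : 1 ≤ r) (hrm : r < m) (hs : s < m) (ht : t < m)
    (h : cyc m s r = cyc m t r) : s = t := by
  have hsmem : s ∈ cyc m t r := by
    rw [← h]
    exact mem_cyc.mpr ⟨0, hr, by simp [Nat.mod_eq_of_lt hs]⟩
  rcases mem_cyc.mp hsmem with ⟨i, hi, hix⟩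
  rcases Nat.eq_zero_or_pos i with rfl | hipos
  · rw [← hix, Nat.add_zero, Nat.mod_eq_of_lt ht]
  · exfalso
    apply cyc_pred_not_mem hrm (s := s) (r := r)
    rw [h, ← hix, Nat.mod_add_mod]
    have heq : t + i + (m - 1) = t + (i - 1) + m := by omega
    rw [heq, Nat.add_mod_right]
    exact mem_cyc.mpr ⟨i - 1, by omega, rfl⟩

lemma mod_inj_Icc {m x y : ℕ} (hx1 : 1 ≤ x) (hx : x ≤ m) (hy1 : 1 ≤ y) (hy : y ≤ m)
    (h : x % m = y % m) : x = y := by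
  rcases lt_or_eq_of_le hx with hx' | rfl
  · rcases lt_or_eq_of_le hy with hy' | hy'
    · rwa [Nat.mod_eq_of_lt hx', Nat.mod_eq_of_lt hy'] at h
    · subst hy'; rw [Nat.mod_eq_of_lt hx', Nat.mod_self] at h; omega
  · rcases lt_or_eq_of_le hy with hy' | hy'
    · rw [Nat.mod_self, Nat.mod_eq_of_lt hy'] at h; omega
    · omega

open scoped Classical in
/-- An `r`-good cyclic ordering of `[k] × [n]` is met by exactly `kn`
members of `𝒫_{k,r,n}`. -/
theorem count_genPerms_meeting (k r n : ℕ) (hr1 : 1 ≤ r) (hr : r ≤ k - 1) (hkn : k ≤ n)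
    (σ : ℕ × ℕ → ℕ)
    (hbij : Set.BijOn σ (Set.Icc 1 k ×ˢ Set.Icc 1 n) (Set.Icc 1 (k * n)))
    (hgood : IsGood k n r σ) :
    ((genPerms k r n).filter fun A => Meets (k * n) σ A).card = k * n := by
  classical
  have hk2 : 2 ≤ k := by omega
  have hn2 : 2 ≤ n := le_trans hk2 hkn
  set m := k * n with hm_def
  have hm : 0 < m := by positivity
  have hrm : r < m := by
    calc r ≤ k - 1 := hr
    _ < k := by omega
    _ ≤ k * n := Nat.le_mul_of_pos_right k (by omega)
  set G : Finset (ℕ × ℕ) := Finset.Icc 1 k ×ˢ Finset.Icc 1 n with hG_def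
  have hGmem : ∀ a ∈ G, 1 ≤ σ a ∧ σ a ≤ m := by
    intro a ha
    rw [hG_def, Finset.mem_product, Finset.mem_Icc, Finset.mem_Icc] at ha
    have : a ∈ Set.Icc 1 k ×ˢ Set.Icc 1 n := by
      constructor <;> simp [Set.mem_Icc] <;> omega
    have := hbij.mapsTo this
    simpa [Set.mem_Icc] using this
  have heinj : ∀ a ∈ G, ∀ b ∈ G, σ a % m = σ b % m → a = b := by
    intro a ha b hb hab
    have h1 := hGmem a ha
    have h2 := hGmem b hb
    have hσ : σ a = σ b := mod_inj_Icc h1.1 h1.2 h2.1 h2.2 hab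
    apply hbij.injOn _ _ hσ
    · rw [hG_def, Finset.mem_product, Finset.mem_Icc, Finset.mem_Icc] at ha
      constructor <;> simp [Set.mem_Icc] <;> omega
    · rw [hG_def, Finset.mem_product, Finset.mem_Icc, Finset.mem_Icc] at hb
      constructor <;> simp [Set.mem_Icc] <;> omega
  have hGcard : G.card = m := by
    rw [hG_def, Finset.card_product]
    simp [Nat.card_Icc]
    exact hm_def.symm
  have himG : G.image (fun a => σ a % m) = Finset.range m := by
    apply Finset.eq_of_subset_of_card_le
    · intro x hx
      rcases Finset.mem_image.mp hx with ⟨a, _, rfl⟩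
      exact Finset.mem_range.mpr (Nat.mod_lt _ hm)
    · rw [Finset.card_range, Finset.card_image_of_injOn, hGcard]
      intro a ha b hb hab
      exact heinj a ha b hb hab
  set F : ℕ → Finset (ℕ × ℕ) := fun s => G.filter (fun a => σ a % m ∈ cyc m s r) with hF_def
  have hFsub : ∀ s, F s ⊆ G := fun s => Finset.filter_subset _ _
  have hFim : ∀ s, (F s).image (fun a => σ a % m) = cyc m s r := by
    intro s
    apply Finset.Subset.antisymm
    · intro x hx
      rcases Finset.mem_image.mp hx with ⟨a, ha, rfl⟩
      exact (Finset.mem_filter.mp ha).2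
    · intro x hx
      have hx' : x ∈ G.image (fun a => σ a % m) := by
        rw [himG]
        exact cyc_subset_range hm hx
      rcases Finset.mem_image.mp hx' with ⟨a, ha, rfl⟩
      exact Finset.mem_image.mpr ⟨a, Finset.mem_filter.mpr ⟨ha, hx⟩, rfl⟩
  have hFcard : ∀ s, (F s).card = r := by
    intro s
    have : ((F s).image (fun a => σ a % m)).card = (F s).card := by
      apply Finset.card_image_of_injOn
      intro a ha b hb hab
      exact heinj a (hFsub s ha) b (hFsub s hb) hab
    rw [hFim s, cyc_card (le_of_lt hrm)] at this
    omega
  have hFmeets : ∀ s, Meets m σ (F s) := by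
    intro s
    exact ⟨s, by rw [hFcard s, hFim s]⟩
  have hFmem : ∀ s, F s ∈ (genPerms k r n).filter fun A => Meets m σ A := by
    intro s
    rw [Finset.mem_filter]
    exact ⟨hgood (F s) (hFsub s) (hFcard s) (hFmeets s), hFmeets s⟩
  have hmain : (genPerms k r n).filter (fun A => Meets m σ A)
      = (Finset.range m).image F := by
    apply Finset.Subset.antisymm
    · intro A hA
      rw [Finset.mem_filter] at hA
      obtain ⟨hA1, s, hs⟩ := hA
      rw [genPerms, Finset.mem_filter, Finset.mem_powerset] at hA1
      obtain ⟨hAsub, hAcard, -, -⟩ := hA1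
      rw [hAcard] at hs
      have hs2 : A.image (fun a => σ a % m) = cyc m (s % m) r := by
        rw [hs, cyc_eq_mod]
      apply Finset.mem_image.mpr
      refine ⟨s % m, Finset.mem_range.mpr (Nat.mod_lt _ hm), ?_⟩
      symm
      apply Finset.eq_of_subset_of_card_le
      · intro a ha
        apply Finset.mem_filter.mpr
        refine ⟨hAsub ha, ?_⟩
        rw [← hs2]
        exact Finset.mem_image.mpr ⟨a, ha, rfl⟩
      · rw [hAcard, hFcard]
    · intro A hA
      rcases Finset.mem_image.mp hA with ⟨s, _, rfl⟩
      exact hFmem s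
  rw [hmain, Finset.card_image_of_injOn, Finset.card_range]
  intro s hs t ht hst
  simp only [Finset.coe_range, Set.mem_Iio] at hs ht
  apply cyc_inj hr1 hrm hs ht
  rw [← hFim s, ← hFim t, hst]
end

section
/- Let k ≤ n be positive integers. Any intersecting subfamily of P_{k,k,n} has size at most (n-1)!/(n-k)!. -/
open Finset

section Aux

/-! ### Auxiliary facts about `mod1` -/

lemma mod1_coe {n : ℕ} (hn : 1 ≤ n) (a : ℤ) : (mod1 a n : ℤ) = (a - 1) % (n : ℤ) + 1 := by
  unfold mod1
  have hn' : (0:ℤ) < n := by exact_mod_cast hn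
  have := Int.emod_nonneg (a - 1) (by positivity : (n:ℤ) ≠ 0)
  rw [Int.toNat_of_nonneg (by linarith)]

lemma mod1_mem {n : ℕ} (hn : 1 ≤ n) (a : ℤ) : mod1 a n ∈ Finset.Icc 1 n := by
  have hn' : (0:ℤ) < n := by exact_mod_cast hn
  have h1 := Int.emod_nonneg (a - 1) (by positivity : (n:ℤ) ≠ 0)
  have h2 := Int.emod_lt_of_pos (a - 1) hn'
  have hcoe := mod1_coe hn a
  rw [Finset.mem_Icc]
  constructor
  · have : (1:ℤ) ≤ (mod1 a n : ℤ) := by rw [hcoe]; linarith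
    exact_mod_cast this
  · have : (mod1 a n : ℤ) ≤ (n:ℤ) := by rw [hcoe]; linarith
    exact_mod_cast this

lemma mod1_eq_iff {n : ℕ} (hn : 1 ≤ n) {a b : ℤ} :
    mod1 a n = mod1 b n ↔ (n : ℤ) ∣ (a - b) := by
  constructor
  · intro h
    have h' : (mod1 a n : ℤ) = (mod1 b n : ℤ) := by exact_mod_cast h
    rw [mod1_coe hn, mod1_coe hn] at h'
    have : (a - 1) % (n:ℤ) = (b - 1) % (n:ℤ) := by linarith
    rw [Int.emod_eq_emod_iff_emod_sub_eq_zero] at this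
    have : (n:ℤ) ∣ (a - 1 - (b - 1)) := Int.dvd_of_emod_eq_zero this
    simpa [sub_sub_sub_cancel_right] using this
  · intro h
    have : (a - 1) % (n:ℤ) = (b - 1) % (n:ℤ) := by
      rw [Int.emod_eq_emod_iff_emod_sub_eq_zero]
      apply Int.emod_eq_zero_of_dvd
      simpa [sub_sub_sub_cancel_right] using h
    unfold mod1
    rw [this]

lemma mod1_of_mem {n : ℕ} {y : ℕ} (hy : y ∈ Finset.Icc 1 n) : mod1 (y : ℤ) n = y := by
  rw [Finset.mem_Icc] at hy
  have h1 : (1:ℤ) ≤ (y:ℤ) := by exact_mod_cast hy.1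
  have h2 : (y:ℤ) ≤ (n:ℤ) := by exact_mod_cast hy.2
  unfold mod1
  rw [Int.emod_eq_of_lt (by linarith) (by linarith)]
  omega

/-! ### The shifting map -/

/-- Shift the second coordinate by `t` cyclically in `{1, …, n}`. -/
def shiftP (n t : ℕ) (p : ℕ × ℕ) : ℕ × ℕ := (p.1, mod1 ((p.2 : ℤ) + t) n)

/-- Shift all second coordinates of a set by `t`. -/
def shiftA (n t : ℕ) (A : Finset (ℕ × ℕ)) : Finset (ℕ × ℕ) := A.image (shiftP n t)

lemma mem_genPerms {k r n : ℕ} {A : Finset (ℕ × ℕ)} :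
    A ∈ genPerms k r n ↔ A ⊆ Finset.Icc 1 k ×ˢ Finset.Icc 1 n ∧ A.card = r ∧
      (∀ p ∈ A, ∀ q ∈ A, p.1 = q.1 → p = q) ∧
      (∀ p ∈ A, ∀ q ∈ A, p.2 = q.2 → p = q) := by
  simp [genPerms, Finset.mem_filter, Finset.mem_powerset, and_assoc]

lemma shiftP_injOn {n t : ℕ} (hn : 1 ≤ n) {p q : ℕ × ℕ}
    (hp : p ∈ Finset.Icc 1 k ×ˢ Finset.Icc 1 n) (hq : q ∈ Finset.Icc 1 k ×ˢ Finset.Icc 1 n)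
    (h : shiftP n t p = shiftP n t q) : p = q := by
  simp only [Finset.mem_product, Finset.mem_Icc] at hp hq
  unfold shiftP at h
  rw [Prod.mk.injEq] at h
  obtain ⟨h1, h2⟩ := h
  rw [mod1_eq_iff hn] at h2
  have h2' : (n:ℤ) ∣ ((p.2 : ℤ) - q.2) := by simpa using h2
  have hz : ((p.2 : ℤ) - q.2) = 0 := by
    apply Int.eq_zero_of_abs_lt_dvd h2'
    rw [abs_lt]
    constructor
    · have : (1:ℤ) ≤ (p.2:ℤ) := by exact_mod_cast hp.2.1
      have : (q.2:ℤ) ≤ (n:ℤ) := by exact_mod_cast hq.2.2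
      omega
    · have : (p.2:ℤ) ≤ (n:ℤ) := by exact_mod_cast hp.2.2
      have : (1:ℤ) ≤ (q.2:ℤ) := by exact_mod_cast hq.2.1
      omega
  have h2'' : p.2 = q.2 := by omega
  exact Prod.ext h1 h2''

lemma shiftA_mem {k n t : ℕ} (hn : 1 ≤ n) {A : Finset (ℕ × ℕ)}
    (hA : A ∈ genPerms k k n) : shiftA n t A ∈ genPerms k k n := by
  rw [mem_genPerms] at hA ⊢
  obtain ⟨hsub, hcard, hfst, hsnd⟩ := hA
  refine ⟨?_, ?_, ?_, ?_⟩
  · intro p hp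
    rw [shiftA, Finset.mem_image] at hp
    obtain ⟨q, hq, rfl⟩ := hp
    have := hsub hq
    simp only [Finset.mem_product] at this ⊢
    exact ⟨this.1, mod1_mem hn _⟩
  · rw [shiftA, Finset.card_image_of_injOn, hcard]
    intro p hp q hq h
    exact shiftP_injOn hn (hsub hp) (hsub hq) h
  · intro p hp q hq h
    rw [shiftA, Finset.mem_image] at hp hq
    obtain ⟨p', hp', rfl⟩ := hp
    obtain ⟨q', hq', rfl⟩ := hq
    have : p' = q' := hfst p' hp' q' hq' h
    rw [this]
  · intro p hp q hq h
    rw [shiftA, Finset.mem_image] at hp hq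
    obtain ⟨p', hp', rfl⟩ := hp
    obtain ⟨q', hq', rfl⟩ := hq
    have h2 : mod1 ((p'.2 : ℤ) + t) n = mod1 ((q'.2 : ℤ) + t) n := h
    rw [mod1_eq_iff hn] at h2
    have h2' : (n:ℤ) ∣ ((p'.2 : ℤ) - q'.2) := by simpa using h2
    have hpg := hsub hp'
    have hqg := hsub hq'
    simp only [Finset.mem_product, Finset.mem_Icc] at hpg hqg
    have hz : ((p'.2 : ℤ) - q'.2) = 0 := by
      apply Int.eq_zero_of_abs_lt_dvd h2'
      have h1 : (1:ℤ) ≤ (p'.2:ℤ) := by exact_mod_cast hpg.2.1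
      have h2 : (p'.2:ℤ) ≤ (n:ℤ) := by exact_mod_cast hpg.2.2
      have h3 : (1:ℤ) ≤ (q'.2:ℤ) := by exact_mod_cast hqg.2.1
      have h4 : (q'.2:ℤ) ≤ (n:ℤ) := by exact_mod_cast hqg.2.2
      rw [abs_lt]; omega
    have : p'.2 = q'.2 := by omega
    rw [hsnd p' hp' q' hq' this]

lemma shiftA_subset_of_eq {k n t : ℕ} (hn : 1 ≤ n) {A B : Finset (ℕ × ℕ)}
    (hA : A ⊆ Finset.Icc 1 k ×ˢ Finset.Icc 1 n) (hB : B ⊆ Finset.Icc 1 k ×ˢ Finset.Icc 1 n)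
    (h : shiftA n t A = shiftA n t B) : A ⊆ B := by
  intro p hp
  have : shiftP n t p ∈ shiftA n t B := by
    rw [← h, shiftA, Finset.mem_image]; exact ⟨p, hp, rfl⟩
  rw [shiftA, Finset.mem_image] at this
  obtain ⟨q, hq, hqe⟩ := this
  have : q = p := shiftP_injOn hn (hB hq) (hA hp) hqe
  rwa [← this]

/-! ### Extracting the underlying injection -/

/-- The value of the generalised permutation `A` at `x`. -/
def sval (A : Finset (ℕ × ℕ)) (x : ℕ) : ℕ := (A.filter fun p => p.1 = x).sum Prod.snd

lemma sval_eq {k n : ℕ} {A : Finset (ℕ × ℕ)} (hA : A ∈ genPerms k k n)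
    {x y : ℕ} (h : (x, y) ∈ A) : sval A x = y := by
  rw [mem_genPerms] at hA
  have : A.filter (fun p => p.1 = x) = {(x, y)} := by
    apply Finset.eq_singleton_iff_unique_mem.2
    refine ⟨Finset.mem_filter.2 ⟨h, rfl⟩, ?_⟩
    intro q hq
    rw [Finset.mem_filter] at hq
    exact hA.2.2.1 q hq.1 (x, y) h hq.2
  rw [sval, this, Finset.sum_singleton]

lemma sval_mem {k n : ℕ} (hk : 1 ≤ k) {A : Finset (ℕ × ℕ)} (hA : A ∈ genPerms k k n)
    {x : ℕ} (hx : x ∈ Finset.Icc 1 k) : (x, sval A x) ∈ A ∧ sval A x ∈ Finset.Icc 1 n := by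
  have hA' := hA
  rw [mem_genPerms] at hA'
  obtain ⟨hsub, hcard, hfst, hsnd⟩ := hA'
  -- the image of the first projection is all of Icc 1 k
  have himg : A.image Prod.fst = Finset.Icc 1 k := by
    apply Finset.eq_of_subset_of_card_le
    · intro z hz
      rw [Finset.mem_image] at hz
      obtain ⟨p, hp, rfl⟩ := hz
      exact (Finset.mem_product.1 (hsub hp)).1
    · have hinj : Set.InjOn Prod.fst (A : Set (ℕ × ℕ)) := by
        intro p hp q hq h
        exact hfst p hp q hq h
      rw [Finset.card_image_of_injOn hinj, hcard, Nat.card_Icc]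
      omega
  have : x ∈ A.image Prod.fst := by rw [himg]; exact hx
  rw [Finset.mem_image] at this
  obtain ⟨p, hp, hpe⟩ := this
  have hpx : p = (x, p.2) := by rw [← hpe]
  have hmem : (x, p.2) ∈ A := by rwa [← hpx]
  have := sval_eq hA hmem
  rw [this]
  refine ⟨hmem, ?_⟩
  exact (Finset.mem_product.1 (hsub hmem)).2

lemma genPerms_card_le {k n : ℕ} (hk : 1 ≤ k) (hkn : k ≤ n) :
    (genPerms k k n).card ≤ n.descFactorial k := by
  have hn : 1 ≤ n := le_trans hk hkn
  have hnpos : 0 < n := hn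
  -- map each A to a function Fin k → Fin n
  set F : Finset (ℕ × ℕ) → (Fin k → Fin n) :=
    fun A i => ⟨(sval A (i.1 + 1) - 1) % n, Nat.mod_lt _ hnpos⟩ with hF
  have key : ∀ A ∈ genPerms k k n, Function.Injective (F A) := by
    intro A hA i j hij
    have hA' := hA; rw [mem_genPerms] at hA'
    have hi := sval_mem hk hA (x := i.1 + 1) (by rw [Finset.mem_Icc]; omega)
    have hj := sval_mem hk hA (x := j.1 + 1) (by rw [Finset.mem_Icc]; omega)
    rw [Finset.mem_Icc] at hi hj
    have hFi : (F A i).1 = sval A (i.1 + 1) - 1 := by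
      simp only [hF]; exact Nat.mod_eq_of_lt (by omega)
    have hFj : (F A j).1 = sval A (j.1 + 1) - 1 := by
      simp only [hF]; exact Nat.mod_eq_of_lt (by omega)
    have hv : sval A (i.1 + 1) = sval A (j.1 + 1) := by
      have := congrArg Fin.val hij
      rw [hFi, hFj] at this
      omega
    have hpq : ((i.1 : ℕ) + 1, sval A (i.1 + 1)) = ((j.1 : ℕ) + 1, sval A (j.1 + 1)) :=
      hA'.2.2.2 _ hi.1 _ hj.1 hv
    rw [Prod.mk.injEq] at hpq
    exact Fin.ext (by omega)
  have hinj : Set.InjOn F (genPerms k k n : Set (Finset (ℕ × ℕ))) := by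
    intro A hA B hB hAB
    simp only [Finset.mem_coe] at hA hB
    have hA' := hA; rw [mem_genPerms] at hA'
    have hB' := hB; rw [mem_genPerms] at hB'
    have hsub : ∀ {X Y : Finset (ℕ × ℕ)}, X ∈ genPerms k k n → Y ∈ genPerms k k n →
        F X = F Y → X ⊆ Y := by
      intro X Y hX hY hXY p hp
      have hX' := hX; rw [mem_genPerms] at hX'
      have hpg := hX'.1 hp
      rw [Finset.mem_product, Finset.mem_Icc, Finset.mem_Icc] at hpg
      have hx1 : p.1 - 1 < k := by omega
      have hvX := sval_eq hX (x := p.1) (y := p.2) (by rwa [Prod.mk.eta])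
      have hmX := sval_mem hk hX (x := p.1) (by rw [Finset.mem_Icc]; omega)
      have hmY := sval_mem hk hY (x := p.1) (by rw [Finset.mem_Icc]; omega)
      rw [Finset.mem_Icc] at hmX hmY
      have heq : F X ⟨p.1 - 1, hx1⟩ = F Y ⟨p.1 - 1, hx1⟩ := by rw [hXY]
      have heq' : (sval X (p.1 - 1 + 1) - 1) % n = (sval Y (p.1 - 1 + 1) - 1) % n :=
        congrArg Fin.val heq
      have hxx : p.1 - 1 + 1 = p.1 := by omega
      rw [hxx] at heq'
      rw [Nat.mod_eq_of_lt (by omega), Nat.mod_eq_of_lt (by omega)] at heq'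
      have : sval X p.1 = sval Y p.1 := by omega
      have : p.2 = sval Y p.1 := by omega
      have := hmY.1
      rw [← ‹p.2 = sval Y p.1›, Prod.mk.eta] at this
      exact this
    exact Finset.Subset.antisymm (hsub hA hB hAB) (hsub hB hA hAB.symm)
  calc (genPerms k k n).card
      ≤ (Finset.univ.filter fun f : Fin k → Fin n => Function.Injective f).card := by
        apply Finset.card_le_card_of_injOn F
        · intro A hA
          rw [Finset.mem_coe, Finset.mem_filter]
          exact ⟨Finset.mem_univ _, key A hA⟩
        · exact hinj
    _ = Fintype.card {f : Fin k → Fin n // Function.Injective f} :=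
        (Fintype.card_subtype _).symm
    _ = Fintype.card (Fin k ↪ Fin n) :=
        Fintype.card_congr (Equiv.subtypeInjectiveEquivEmbedding _ _)
    _ = n.descFactorial k := by rw [Fintype.card_embedding_eq, Fintype.card_fin, Fintype.card_fin]

end Aux

/-- An intersecting subfamily of `𝒫_{k,k,n}` has size at most
`(n-1)!/(n-k)!`. -/
theorem genPerms_full_bound (k n : ℕ) (hk : 1 ≤ k) (hkn : k ≤ n)
    (𝒜 : Finset (Finset (ℕ × ℕ))) (h𝒜 : 𝒜 ⊆ genPerms k k n) (hint : Intersecting 𝒜) :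
    𝒜.card ≤ (n - 1).factorial / (n - k).factorial := by
  have hn : 1 ≤ n := le_trans hk hkn
  -- Step 1: 𝒜.card * n ≤ (genPerms k k n).card
  have step1 : 𝒜.card * n ≤ (genPerms k k n).card := by
    have := Finset.card_le_card_of_injOn
      (s := 𝒜 ×ˢ Finset.range n) (t := genPerms k k n)
      (fun z => shiftA n z.2 z.1) ?_ ?_
    · rwa [Finset.card_product, Finset.card_range] at this
    · rintro ⟨A, t⟩ hz
      rw [Finset.mem_coe, Finset.mem_product] at hz
      exact shiftA_mem hn (h𝒜 hz.1)
    · rintro ⟨A, s⟩ hz1 ⟨B, t⟩ hz2 h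
      simp only [Finset.coe_product, Set.mem_prod, Finset.mem_coe, Finset.mem_range] at hz1 hz2
      obtain ⟨hA, hs⟩ := hz1
      obtain ⟨hB, ht⟩ := hz2
      simp only at h
      obtain ⟨p, hp⟩ := hint A hA B hB
      rw [Finset.mem_inter] at hp
      have hAg := h𝒜 hA
      have hBg := h𝒜 hB
      rw [mem_genPerms] at hAg hBg
      -- shiftP n s p ∈ shiftA n s A = shiftA n t B
      have hmem : shiftP n s p ∈ shiftA n t B := by
        rw [← h, shiftA, Finset.mem_image]; exact ⟨p, hp.1, rfl⟩
      rw [shiftA, Finset.mem_image] at hmem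
      obtain ⟨q, hq, hqe⟩ := hmem
      unfold shiftP at hqe
      rw [Prod.mk.injEq] at hqe
      obtain ⟨hq1, h2⟩ := hqe
      have hqp : q = p := hBg.2.2.1 q hq p hp.2 hq1
      subst hqp
      rw [mod1_eq_iff hn] at h2
      have h2' : (n:ℤ) ∣ ((t : ℤ) - s) := by simpa using h2
      have hst : s = t := by
        have := Int.eq_zero_of_abs_lt_dvd h2' (by rw [abs_lt]; omega)
        omega
      subst hst
      have hAB : A = B :=
        Finset.Subset.antisymm (shiftA_subset_of_eq hn hAg.1 hBg.1 h)
          (shiftA_subset_of_eq hn hBg.1 hAg.1 h.symm)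
      rw [hAB]
  -- Step 2: (genPerms k k n).card ≤ n * ((n-1)!/(n-k)!)
  have step2 : (genPerms k k n).card ≤ n * ((n - 1).factorial / (n - k).factorial) := by
    calc (genPerms k k n).card ≤ n.descFactorial k := genPerms_card_le hk hkn
      _ = n.factorial / (n - k).factorial := Nat.descFactorial_eq_div hkn
      _ = n * (n - 1).factorial / (n - k).factorial := by rw [Nat.mul_factorial_pred (by omega : n ≠ 0)]
      _ = n * ((n - 1).factorial / (n - k).factorial) := by
          rw [Nat.mul_div_assoc n (Nat.factorial_dvd_factorial (by omega : n - k ≤ n - 1))]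
  have : 𝒜.card * n ≤ ((n - 1).factorial / (n - k).factorial) * n := by
    rw [mul_comm ((n - 1).factorial / (n - k).factorial) n]
    exact le_trans step1 step2
  exact Nat.le_of_mul_le_mul_right this hn
end
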